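/- arXiv:2406.13983 — 7 statements merged into one kernel-verified Lean document; each statement's English description precedes it below -/
import Mathlib

section
/- Let G=(L,R,E) be a finite bipartite graph and let x : E → [0,1]. Then there exists a finitely supported probability distribution over functions X : E → {0,1} satisfying: (P1) for every e ∈ E, Pr(X_e = 1) = x_e; (P2) with probability 1, for every vertex a, X(a) ∈ {⌊x(a)⌋, ⌈x(a)⌉}; and (P3) for every vertex a, every subset S of the edges incident to a, and every c ∈ {0,1}, Pr(∀ e ∈ S, X_e = c) ≤ Π_{e∈S} Pr(X_e = c). -/
open Finset
set_option linter.unusedSectionVars false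
set_option maxHeartbeats 1000000

section Walk
variable {α β : Type*} [Fintype α] [Fintype β] [DecidableEq α] [DecidableEq β]

def wcond (v : ℕ → α ⊕ β) (e : α × β) (j : ℕ) : Prop :=
  (v j = Sum.inl e.1 ∧ v (j+1) = Sum.inr e.2) ∨ (v j = Sum.inr e.2 ∧ v (j+1) = Sum.inl e.1)

instance (v : ℕ → α ⊕ β) (e : α × β) (j : ℕ) : Decidable (wcond v e j) := by
  unfold wcond; infer_instance

def tst : α ⊕ β → α × β → Bool
  | .inl a, e => decide (e.1 = a)
  | .inr b, e => decide (e.2 = b)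

def IsLeaf (F : Finset (α × β)) (u : α ⊕ β) : Prop :=
  (F.filter (fun e => tst u e)).card = 1

def gWalk (v : ℕ → α ⊕ β) (len : ℕ) (e : α × β) : ℤ :=
  ∑ j ∈ Finset.range len, if wcond v e j then (-1 : ℤ)^j else 0

def KeyGoal (F : Finset (α × β)) : Prop :=
  ∃ g : α × β → ℤ,
    (∀ e, g e ≠ 0 → e ∈ F) ∧
    (∀ e, g e = 0 ∨ g e = 1 ∨ g e = -1) ∧
    (∃ e, g e ≠ 0) ∧
    (∀ a : α,
      (((F.filter (fun e => e.1 = a)).filter (fun e => g e ≠ 0)).card ≤ 2 ∧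
        ∑ e ∈ F.filter (fun e => e.1 = a), g e = 0) ∨
      (F.filter (fun e => e.1 = a)).card = 1) ∧
    (∀ b : β,
      (((F.filter (fun e => e.2 = b)).filter (fun e => g e ≠ 0)).card ≤ 2 ∧
        ∑ e ∈ F.filter (fun e => e.2 = b), g e = 0) ∨
      (F.filter (fun e => e.2 = b)).card = 1)

lemma wcond_unique {v : ℕ → α ⊕ β} {e e' : α × β} {j : ℕ}
    (h : wcond v e j) (h' : wcond v e' j) : e = e' := by
  rcases h with ⟨h1, h2⟩ | ⟨h1, h2⟩ <;> rcases h' with ⟨h1', h2'⟩ | ⟨h1', h2'⟩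
  · rw [h1] at h1'; rw [h2] at h2'
    exact Prod.ext (Sum.inl.inj h1') (Sum.inr.inj h2')
  · rw [h1] at h1'; exact absurd h1' (by simp)
  · rw [h1] at h1'; exact absurd h1' (by simp)
  · rw [h1] at h1'; rw [h2] at h2'
    exact Prod.ext (Sum.inl.inj h2') (Sum.inr.inj h1')

lemma gWalk_eq_of_unique {v : ℕ → α ⊕ β} {len : ℕ} {e : α × β} {j0 : ℕ}
    (hj0 : j0 < len) (hc : wcond v e j0) (huniq : ∀ j < len, wcond v e j → j = j0) :
    gWalk v len e = (-1 : ℤ)^j0 := by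
  unfold gWalk
  rw [Finset.sum_eq_single_of_mem j0 (Finset.mem_range.2 hj0)]
  · simp [hc]
  · intro j hj hne
    rw [if_neg]
    intro hcj
    exact hne (huniq j (Finset.mem_range.1 hj) hcj)

lemma gWalk_eq_zero {v : ℕ → α ⊕ β} {len : ℕ} {e : α × β}
    (h : ∀ j < len, ¬ wcond v e j) : gWalk v len e = 0 := by
  unfold gWalk
  apply Finset.sum_eq_zero
  intro j hj
  rw [if_neg (h j (Finset.mem_range.1 hj))]

variable {F : Finset (α × β)} {v : ℕ → α ⊕ β} {E : ℕ → α × β} {m : ℕ}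

lemma vne (hE : ∀ j < m, E j ∈ F ∧ wcond v (E j) j) {j : ℕ} (hj : j < m) :
    v j ≠ v (j+1) := by
  obtain ⟨-, hc⟩ := hE j hj
  rcases hc with ⟨h1, h2⟩ | ⟨h1, h2⟩ <;> rw [h1, h2] <;> simp

lemma occ_of_mem (hE : ∀ j < m, E j ∈ F ∧ wcond v (E j) j) {u : α ⊕ β} {j : ℕ}
    (hj : j < m) (ht : tst u (E j) = true) : v j = u ∨ v (j+1) = u := by
  obtain ⟨-, hc⟩ := hE j hj
  rcases u with a | b
  · have ha : (E j).1 = a := by simpa [tst] using ht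
    rcases hc with ⟨h1, -⟩ | ⟨-, h2⟩
    · left; rw [h1, ha]
    · right; rw [h2, ha]
  · have hb : (E j).2 = b := by simpa [tst] using ht
    rcases hc with ⟨-, h2⟩ | ⟨h1, -⟩
    · right; rw [h2, hb]
    · left; rw [h1, hb]

lemma mem_of_occ (hE : ∀ j < m, E j ∈ F ∧ wcond v (E j) j) {u : α ⊕ β} {j : ℕ}
    (hj : j < m) (h : v j = u ∨ v (j+1) = u) : tst u (E j) = true := by
  obtain ⟨-, hc⟩ := hE j hj
  rcases hc with ⟨h1, h2⟩ | ⟨h1, h2⟩ <;> rcases h with h | h <;>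
    rw [← h] <;> first
    | (rw [h1]; simp [tst])
    | (rw [h2]; simp [tst])

lemma innerSumW (hE : ∀ j < m, E j ∈ F ∧ wcond v (E j) j) (u : α ⊕ β) {j : ℕ}
    (hj : j < m) :
    ∑ e ∈ F.filter (fun e => tst u e), (if wcond v e j then ((-1:ℤ)^j) else 0)
      = (if v j = u then (-1:ℤ)^j else 0) + (if v (j+1) = u then (-1:ℤ)^j else 0) := by
  by_cases h1 : v j = u
  · have h2 : ¬ v (j+1) = u := fun h2 => (vne hE hj) (h1.trans h2.symm)
    rw [if_pos h1, if_neg h2, add_zero]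
    rw [Finset.sum_eq_single_of_mem (E j)
      (Finset.mem_filter.2 ⟨(hE j hj).1, mem_of_occ hE hj (Or.inl h1)⟩)]
    · rw [if_pos (hE j hj).2]
    · intro e he hne
      rw [if_neg]
      intro hc
      exact hne (wcond_unique hc (hE j hj).2)
  · by_cases h2 : v (j+1) = u
    · rw [if_neg h1, if_pos h2, zero_add]
      rw [Finset.sum_eq_single_of_mem (E j)
        (Finset.mem_filter.2 ⟨(hE j hj).1, mem_of_occ hE hj (Or.inr h2)⟩)]
      · rw [if_pos (hE j hj).2]
      · intro e he hne
        rw [if_neg]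
        intro hc
        exact hne (wcond_unique hc (hE j hj).2)
    · rw [if_neg h1, if_neg h2, add_zero]
      apply Finset.sum_eq_zero
      intro e he
      rw [if_neg]
      intro hc
      have he' : e = E j := wcond_unique hc (hE j hj).2
      have := occ_of_mem hE hj (by rw [← he']; exact (Finset.mem_filter.1 he).2)
      tauto

lemma sum_g (hE : ∀ j < m, E j ∈ F ∧ wcond v (E j) j) (u : α ⊕ β) :
    ∑ e ∈ F.filter (fun e => tst u e), gWalk v m e
      = ∑ j ∈ Finset.range m,
          ((if v j = u then (-1:ℤ)^j else 0) + (if v (j+1) = u then (-1:ℤ)^j else 0)) := by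
  unfold gWalk
  rw [Finset.sum_comm]
  exact Finset.sum_congr rfl fun j hj => innerSumW hE u (Finset.mem_range.1 hj)

lemma card_W_le (hE : ∀ j < m, E j ∈ F ∧ wcond v (E j) j) (u : α ⊕ β) :
    ((F.filter (fun e => tst u e)).filter (fun e => gWalk v m e ≠ 0)).card
      ≤ (((Finset.range m).filter (fun j => v j = u ∨ v (j+1) = u))).card := by
  refine le_trans (Finset.card_le_card ?_) (Finset.card_image_le (f := E))
  intro e he
  obtain ⟨he1, hg⟩ := Finset.mem_filter.1 he
  have hex : ∃ j, j < m ∧ wcond v e j := by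
    by_contra hno
    push_neg at hno
    exact hg (gWalk_eq_zero (fun j hj => hno j hj))
  obtain ⟨j, hj, hc⟩ := hex
  have heE : e = E j := wcond_unique hc (hE j hj).2
  refine Finset.mem_image.2 ⟨j, Finset.mem_filter.2 ⟨Finset.mem_range.2 hj, ?_⟩, heE.symm⟩
  exact occ_of_mem hE hj (by rw [← heE]; exact (Finset.mem_filter.1 he1).2)

lemma neg_pow_cancel {i : ℕ} (hi : 0 < i) : (-1:ℤ)^i + (-1:ℤ)^(i-1) = 0 := by
  obtain ⟨k, rfl⟩ := Nat.exists_eq_add_of_le hi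
  have : 1 + k - 1 = k := by omega
  rw [this, pow_add]
  ring


lemma path_unique (hinj : ∀ x ≤ m, ∀ y ≤ m, v x = v y → x = y) :
    ∀ (e : α × β) (j j' : ℕ), j < m → j' < m → wcond v e j → wcond v e j' → j = j' := by
  intro e j j' hj hj' hc hc'
  rcases hc with ⟨h1, h2⟩ | ⟨h1, h2⟩ <;> rcases hc' with ⟨h1', h2'⟩ | ⟨h1', h2'⟩
  · exact hinj j (by omega) j' (by omega) (h1.trans h1'.symm)
  · have e1 := hinj j (by omega) (j'+1) (by omega) (h1.trans h2'.symm)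
    have e2 := hinj (j+1) (by omega) j' (by omega) (h2.trans h1'.symm)
    omega
  · have e1 := hinj j (by omega) (j'+1) (by omega) (h1.trans h2'.symm)
    have e2 := hinj (j+1) (by omega) j' (by omega) (h2.trans h1'.symm)
    omega
  · exact hinj j (by omega) j' (by omega) (h1.trans h1'.symm)

lemma cycle_vinj (hinjc : ∀ x < m, ∀ y < m, v x = v y → x = y) (hclose : v m = v 0)
    (hm : 0 < m) :
    ∀ x ≤ m, ∀ y ≤ m, v x = v y → x = y ∨ (x = 0 ∧ y = m) ∨ (x = m ∧ y = 0) := by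
  intro x hx y hy h
  rcases Nat.lt_or_ge x m with hxm | hxm
  · rcases Nat.lt_or_ge y m with hym | hym
    · exact Or.inl (hinjc x hxm y hym h)
    · have hym' : y = m := by omega
      rw [hym', hclose] at h
      have := hinjc x hxm 0 hm h
      omega
  · have hxm' : x = m := by omega
    rcases Nat.lt_or_ge y m with hym | hym
    · rw [hxm', hclose] at h
      have := hinjc 0 hm y hym h
      omega
    · omega

lemma cycle_unique (hinjc : ∀ x < m, ∀ y < m, v x = v y → x = y) (hclose : v m = v 0)
    (hm : 2 < m) :
    ∀ (e : α × β) (j j' : ℕ), j < m → j' < m → wcond v e j → wcond v e j' → j = j' := by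
  have vinj' := cycle_vinj hinjc hclose (by omega)
  intro e j j' hj hj' hc hc'
  rcases hc with ⟨h1, h2⟩ | ⟨h1, h2⟩ <;> rcases hc' with ⟨h1', h2'⟩ | ⟨h1', h2'⟩
  · rcases vinj' j (by omega) j' (by omega) (h1.trans h1'.symm) with h | h | h <;> omega
  · rcases vinj' j (by omega) (j'+1) (by omega) (h1.trans h2'.symm) with h | h | h <;>
      rcases vinj' (j+1) (by omega) j' (by omega) (h2.trans h1'.symm) with h' | h' | h' <;>
      omega
  · rcases vinj' j (by omega) (j'+1) (by omega) (h1.trans h2'.symm) with h | h | h <;>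
      rcases vinj' (j+1) (by omega) j' (by omega) (h2.trans h1'.symm) with h' | h' | h' <;>
      omega
  · rcases vinj' j (by omega) j' (by omega) (h1.trans h1'.symm) with h | h | h <;> omega

lemma path_vertex (hE : ∀ j < m, E j ∈ F ∧ wcond v (E j) j)
    (hinj : ∀ x ≤ m, ∀ y ≤ m, v x = v y → x = y) (hm : 1 ≤ m)
    (hleaf0 : IsLeaf F (v 0)) (hleafm : IsLeaf F (v m)) (u : α ⊕ β) :
    (((F.filter (fun e => tst u e)).filter (fun e => gWalk v m e ≠ 0)).card ≤ 2 ∧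
      ∑ e ∈ F.filter (fun e => tst u e), gWalk v m e = 0) ∨
    (F.filter (fun e => tst u e)).card = 1 := by
  by_cases hocc : ∃ i, i ≤ m ∧ v i = u
  · obtain ⟨i, him, hiu⟩ := hocc
    by_cases hi0 : i = 0
    · right
      unfold IsLeaf at hleaf0
      rw [← hiu, hi0]
      exact hleaf0
    by_cases him' : i = m
    · right
      unfold IsLeaf at hleafm
      rw [← hiu, him']
      exact hleafm
    have hi1 : 0 < i := by omega
    have him2 : i < m := by omega
    left
    constructor
    · refine le_trans (card_W_le hE u) (le_trans (Finset.card_le_card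
        (s := ((Finset.range m).filter (fun j => v j = u ∨ v (j+1) = u)))
        (t := ({i-1, i} : Finset ℕ)) ?_) ?_)
      · intro j hj
        obtain ⟨hjr, hor⟩ := Finset.mem_filter.1 hj
        have hjm := Finset.mem_range.1 hjr
        rcases hor with h | h
        · have : j = i := hinj j (by omega) i (by omega) (h.trans hiu.symm)
          simp [this]
        · have : j + 1 = i := hinj (j+1) (by omega) i (by omega) (h.trans hiu.symm)
          have : j = i - 1 := by omega
          simp [this]
      · exact le_trans (Finset.card_insert_le _ _) (by simp)
    · rw [sum_g hE u, Finset.sum_add_distrib]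
      have h1 : ∀ j ∈ Finset.range m, (if v j = u then (-1:ℤ)^j else 0)
          = (if j = i then (-1:ℤ)^j else 0) := by
        intro j hj
        have hjm := Finset.mem_range.1 hj
        refine if_congr ⟨fun h => hinj j (by omega) i (by omega) (h.trans hiu.symm),
          fun h => by rw [h]; exact hiu⟩ rfl rfl
      have h2 : ∀ j ∈ Finset.range m, (if v (j+1) = u then (-1:ℤ)^j else 0)
          = (if j = i - 1 then (-1:ℤ)^j else 0) := by
        intro j hj
        have hjm := Finset.mem_range.1 hj
        refine if_congr ⟨fun h => ?_, fun h => ?_⟩ rfl rfl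
        · have := hinj (j+1) (by omega) i (by omega) (h.trans hiu.symm)
          omega
        · have : j + 1 = i := by omega
          rw [this]; exact hiu
      rw [Finset.sum_congr rfl h1, Finset.sum_congr rfl h2,
        Finset.sum_ite_eq' (Finset.range m) i, Finset.sum_ite_eq' (Finset.range m) (i-1),
        if_pos (Finset.mem_range.2 him2), if_pos (Finset.mem_range.2 (by omega : i - 1 < m))]
      exact neg_pow_cancel hi1
  · push_neg at hocc
    left
    constructor
    · refine le_trans (card_W_le hE u) ?_
      have : ((Finset.range m).filter (fun j => v j = u ∨ v (j+1) = u)) = ∅ := by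
        apply Finset.filter_eq_empty_iff.2
        intro j hj
        have hjm := Finset.mem_range.1 hj
        rintro (h | h)
        · exact hocc j (by omega) h
        · exact hocc (j+1) (by omega) h
      rw [this]
      simp
    · rw [sum_g hE u]
      apply Finset.sum_eq_zero
      intro j hj
      have hjm := Finset.mem_range.1 hj
      rw [if_neg (hocc j (by omega)), if_neg (hocc (j+1) (by omega))]
      simp

lemma cycle_vertex (hE : ∀ j < m, E j ∈ F ∧ wcond v (E j) j)
    (hinjc : ∀ x < m, ∀ y < m, v x = v y → x = y) (hclose : v m = v 0)
    (hm : 2 < m) (hmev : Even m) (u : α ⊕ β) :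
    (((F.filter (fun e => tst u e)).filter (fun e => gWalk v m e ≠ 0)).card ≤ 2 ∧
      ∑ e ∈ F.filter (fun e => tst u e), gWalk v m e = 0) := by
  by_cases hocc : ∃ i, i < m ∧ v i = u
  · obtain ⟨i, him, hiu⟩ := hocc
    constructor
    · refine le_trans (card_W_le hE u) (le_trans (Finset.card_le_card
        (s := ((Finset.range m).filter (fun j => v j = u ∨ v (j+1) = u)))
        (t := ({(if i = 0 then m - 1 else i - 1), i} : Finset ℕ)) ?_) ?_)
      · intro j hj
        obtain ⟨hjr, hor⟩ := Finset.mem_filter.1 hj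
        have hjm := Finset.mem_range.1 hjr
        rcases hor with h | h
        · have : j = i := hinjc j (by omega) i (by omega) (h.trans hiu.symm)
          simp [this]
        · rcases Nat.lt_or_ge (j+1) m with hj1 | hj1
          · have hji : j + 1 = i := hinjc (j+1) (by omega) i (by omega) (h.trans hiu.symm)
            have hi0 : ¬ i = 0 := by omega
            have : j = i - 1 := by omega
            rw [Finset.mem_insert, if_neg hi0]
            exact Or.inl this
          · have hjm1 : j + 1 = m := by omega
            rw [hjm1, hclose] at h
            have : (0:ℕ) = i := hinjc 0 (by omega) i (by omega) (h.trans hiu.symm)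
            rw [Finset.mem_insert, if_pos this.symm]
            exact Or.inl (by omega)
      · exact le_trans (Finset.card_insert_le _ _) (by simp)
    · rw [sum_g hE u, Finset.sum_add_distrib]
      have h1 : ∀ j ∈ Finset.range m, (if v j = u then (-1:ℤ)^j else 0)
          = (if j = i then (-1:ℤ)^j else 0) := by
        intro j hj
        have hjm := Finset.mem_range.1 hj
        refine if_congr ⟨fun h => hinjc j (by omega) i (by omega) (h.trans hiu.symm),
          fun h => by rw [h]; exact hiu⟩ rfl rfl
      rw [Finset.sum_congr rfl h1, Finset.sum_ite_eq' (Finset.range m) i,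
        if_pos (Finset.mem_range.2 him)]
      by_cases hi0 : i = 0
      · have h2 : ∀ j ∈ Finset.range m, (if v (j+1) = u then (-1:ℤ)^j else 0)
            = (if j = m - 1 then (-1:ℤ)^j else 0) := by
          intro j hj
          have hjm := Finset.mem_range.1 hj
          refine if_congr ⟨fun h => ?_, fun h => ?_⟩ rfl rfl
          · rcases Nat.lt_or_ge (j+1) m with hj1 | hj1
            · have := hinjc (j+1) (by omega) i (by omega) (h.trans hiu.symm)
              omega
            · omega
          · have : j + 1 = m := by omega
            rw [this, hclose, ← hi0] at *
            exact hiu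
        rw [Finset.sum_congr rfl h2, Finset.sum_ite_eq' (Finset.range m) (m-1),
          if_pos (Finset.mem_range.2 (by omega : m - 1 < m)), hi0]
        have hodd : Odd (m - 1) := Nat.Even.sub_odd (by omega) hmev odd_one
        rw [hodd.neg_one_pow]
        simp
      · have h2 : ∀ j ∈ Finset.range m, (if v (j+1) = u then (-1:ℤ)^j else 0)
            = (if j = i - 1 then (-1:ℤ)^j else 0) := by
          intro j hj
          have hjm := Finset.mem_range.1 hj
          refine if_congr ⟨fun h => ?_, fun h => ?_⟩ rfl rfl
          · rcases Nat.lt_or_ge (j+1) m with hj1 | hj1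
            · have := hinjc (j+1) (by omega) i (by omega) (h.trans hiu.symm)
              omega
            · have : j + 1 = m := by omega
              rw [this, hclose] at h
              have := hinjc 0 (by omega) i (by omega) (h.trans hiu.symm)
              omega
          · have : j + 1 = i := by omega
            rw [this]
            exact hiu
        rw [Finset.sum_congr rfl h2, Finset.sum_ite_eq' (Finset.range m) (i-1),
          if_pos (Finset.mem_range.2 (by omega : i - 1 < m))]
        exact neg_pow_cancel (by omega)
  · push_neg at hocc
    constructor
    · refine le_trans (card_W_le hE u) ?_
      have : ((Finset.range m).filter (fun j => v j = u ∨ v (j+1) = u)) = ∅ := by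
        apply Finset.filter_eq_empty_iff.2
        intro j hj
        have hjm := Finset.mem_range.1 hj
        rintro (h | h)
        · exact hocc j (by omega) h
        · rcases Nat.lt_or_ge (j+1) m with hj1 | hj1
          · exact hocc (j+1) (by omega) h
          · have : j + 1 = m := by omega
            rw [this, hclose] at h
            exact hocc 0 (by omega) h
      rw [this]
      simp
    · rw [sum_g hE u]
      apply Finset.sum_eq_zero
      intro j hj
      have hjm := Finset.mem_range.1 hj
      rw [if_neg (hocc j (by omega))]
      rcases Nat.lt_or_ge (j+1) m with hj1 | hj1
      · rw [if_neg (hocc (j+1) (by omega))]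
        simp
      · have : j + 1 = m := by omega
        rw [this, hclose, if_neg (hocc 0 (by omega))]
        simp

lemma key_assemble (hm : 0 < m) (hE : ∀ j < m, E j ∈ F ∧ wcond v (E j) j)
    (huniq : ∀ (e : α × β) (j j' : ℕ), j < m → j' < m → wcond v e j → wcond v e j' → j = j')
    (hvert : ∀ u : α ⊕ β,
      (((F.filter (fun e => tst u e)).filter (fun e => gWalk v m e ≠ 0)).card ≤ 2 ∧
        ∑ e ∈ F.filter (fun e => tst u e), gWalk v m e = 0) ∨
      (F.filter (fun e => tst u e)).card = 1) :
    KeyGoal F := by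
  refine ⟨gWalk v m, ?_, ?_, ?_, ?_, ?_⟩
  · intro e hg
    have hex : ∃ j, j < m ∧ wcond v e j := by
      by_contra hno
      push_neg at hno
      exact hg (gWalk_eq_zero (fun j hj => hno j hj))
    obtain ⟨j, hj, hc⟩ := hex
    rw [wcond_unique hc (hE j hj).2]
    exact (hE j hj).1
  · intro e
    by_cases hex : ∃ j, j < m ∧ wcond v e j
    · obtain ⟨j, hj, hc⟩ := hex
      rw [gWalk_eq_of_unique hj hc (fun j' hj' hc' => huniq e j' j hj' hj hc' hc)]
      rcases Nat.even_or_odd j with h | h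
      · rw [h.neg_one_pow]; tauto
      · rw [h.neg_one_pow]; tauto
    · push_neg at hex
      exact Or.inl (gWalk_eq_zero fun j hj => hex j hj)
  · refine ⟨E 0, ?_⟩
    rw [gWalk_eq_of_unique hm (hE 0 hm).2
      (fun j hj hc => huniq (E 0) j 0 hj hm hc (hE 0 hm).2)]
    simp
  · intro a
    have hfa : F.filter (fun e => tst (Sum.inl a : α ⊕ β) e) = F.filter (fun e => e.1 = a) :=
      Finset.filter_congr (fun e _ => by simp [tst])
    have := hvert (Sum.inl a)
    rw [hfa] at this
    exact this
  · intro b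
    have hfb : F.filter (fun e => tst (Sum.inr b : α ⊕ β) e) = F.filter (fun e => e.2 = b) :=
      Finset.filter_congr (fun e _ => by simp [tst])
    have := hvert (Sum.inr b)
    rw [hfb] at this
    exact this


def vpair (x y : α ⊕ β) (e : α × β) : Prop :=
  (x = Sum.inl e.1 ∧ y = Sum.inr e.2) ∨ (x = Sum.inr e.2 ∧ y = Sum.inl e.1)

lemma wcond_eq (v : ℕ → α ⊕ β) (e : α × β) (j : ℕ) :
    wcond v e j = vpair (v j) (v (j+1)) e := rfl

lemma far_vertex {w : α ⊕ β} {e : α × β} (ht : tst w e = true) :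
    ∃ u, u.isLeft = !w.isLeft ∧ vpair w u e := by
  rcases w with a | b
  · have h : e.1 = a := by simpa [tst] using ht
    exact ⟨Sum.inr e.2, by simp, Or.inl ⟨by rw [h], rfl⟩⟩
  · have h : e.2 = b := by simpa [tst] using ht
    exact ⟨Sum.inl e.1, by simp, Or.inr ⟨by rw [h], rfl⟩⟩

lemma vpair_rev_eq {x y : α ⊕ β} {e e' : α × β} (h : vpair x y e) (h' : vpair y x e') :
    e = e' := by
  rcases h with ⟨h1, h2⟩ | ⟨h1, h2⟩ <;> rcases h' with ⟨h1', h2'⟩ | ⟨h1', h2'⟩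
  · rw [h2] at h1'; exact absurd h1' (by simp)
  · exact Prod.ext (Sum.inl.inj (h1.symm.trans h2')) (Sum.inr.inj (h2.symm.trans h1'))
  · exact Prod.ext (Sum.inl.inj (h2.symm.trans h1')) (Sum.inr.inj (h1.symm.trans h2'))
  · rw [h2] at h1'; exact absurd h1' (by simp)

lemma bool_flip {s p q : Bool} (h : q = !p) : (s == q) = !(s == p) := by
  revert h; cases s <;> cases p <;> cases q <;> decide

lemma bool_opp {s p q : Bool} (h : (s == p) = !(s == q)) : p ≠ q := by
  revert h; cases s <;> cases p <;> cases q <;> decide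

lemma mod2_succ (m : ℕ) : decide ((m+1) % 2 = 0) = !decide (m % 2 = 0) := by
  by_cases h : m % 2 = 0
  · have e1 : (m+1) % 2 = 1 := by omega
    simp [e1, h]
  · have e1 : (m+1) % 2 = 0 := by omega
    have e2 : m % 2 = 1 := by omega
    simp [e1, e2]

lemma step (hm : 1 ≤ m)
    (hE : ∀ j < m, E j ∈ F ∧ wcond v (E j) j)
    (hinj : ∀ x ≤ m, ∀ y ≤ m, v x = v y → x = y)
    (hside : ∀ j ≤ m, (v j).isLeft = ((v 0).isLeft == decide (j % 2 = 0)))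
    (hleaf : IsLeaf F (v 0) ∨ ∀ u, ¬ IsLeaf F u) :
    KeyGoal F ∨ ∃ (v' : ℕ → α ⊕ β) (E' : ℕ → α × β),
      (∀ j < m+1, E' j ∈ F ∧ wcond v' (E' j) j) ∧
      (∀ x ≤ m+1, ∀ y ≤ m+1, v' x = v' y → x = y) ∧
      (∀ j ≤ m+1, (v' j).isLeft = ((v' 0).isLeft == decide (j % 2 = 0))) ∧
      v' 0 = v 0 := by
  have hm1 : m - 1 < m := by omega
  have hm1' : m - 1 + 1 = m := by omega
  have hlast : vpair (v (m-1)) (v m) (E (m-1)) := by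
    have := (hE (m-1) hm1).2
    rw [wcond_eq, hm1'] at this
    exact this
  by_cases hC : ((F.filter (fun e => tst (v m) e)).erase (E (m-1))).Nonempty
  · obtain ⟨e', he'⟩ := hC
    have he'ne : e' ≠ E (m-1) := (Finset.mem_erase.1 he').1
    have he'F : e' ∈ F := (Finset.mem_filter.1 (Finset.mem_erase.1 he').2).1
    have he't : tst (v m) e' = true := (Finset.mem_filter.1 (Finset.mem_erase.1 he').2).2
    obtain ⟨u, hul, hpair⟩ := far_vertex he't
    have hunm : u ≠ v m := by
      intro h
      rw [h] at hul
      exact absurd hul (by cases v m <;> simp)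
    by_cases hu : ∃ i, i ≤ m ∧ v i = u
    · -- found a cycle
      obtain ⟨i, him, hiu⟩ := hu
      have hine : i ≠ m := by
        intro h
        rw [h] at hiu
        exact hunm hiu.symm
      have hine1 : i ≠ m - 1 := by
        intro h
        apply he'ne
        rw [h] at hiu
        exact vpair_rev_eq (by rw [hiu]; exact hpair) hlast
      have him2 : i ≤ m - 2 := by omega
      set L := m - i + 1 with hL
      have hL3 : 2 < L := by omega
      have hLm : 0 < L := by omega
      set cv : ℕ → α ⊕ β := fun j => if j < L then v (i + j) else u with hcv
      set cE : ℕ → α × β := fun j => if j = L - 1 then e' else E (i + j) with hcE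
      have hcv0 : cv 0 = v i := by simp [hcv, hLm]
      have hcvL : cv L = u := by simp [hcv]
      have hclose : cv L = cv 0 := by rw [hcvL, hcv0, hiu]
      have hEc : ∀ j < L, cE j ∈ F ∧ wcond cv (cE j) j := by
        intro j hj
        by_cases hjL : j = L - 1
        · have h1 : cE j = e' := by rw [hjL]; exact if_pos rfl
          have h2 : cv j = v m := by
            rw [hcv]
            simp only [hjL]
            rw [if_pos (by omega)]
            congr 1
            omega
          have h3 : cv (j+1) = u := by
            rw [hcv]
            simp only [hjL]
            rw [if_neg (by omega)]
          refine ⟨h1 ▸ he'F, ?_⟩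
          rw [h1, wcond_eq, h2, h3]
          exact hpair
        · have hjL' : j < L - 1 := by omega
          have h1 : cE j = E (i + j) := if_neg hjL
          have hij : i + j < m := by omega
          have h2 : cv j = v (i + j) := by rw [hcv]; simp only []; rw [if_pos (by omega)]
          have h3 : cv (j+1) = v (i + j + 1) := by
            rw [hcv]
            simp only []
            rw [if_pos (by omega)]
            congr 1
          refine ⟨h1 ▸ (hE (i+j) hij).1, ?_⟩
          rw [h1, wcond_eq, h2, h3]
          have := (hE (i+j) hij).2
          rw [wcond_eq] at this
          exact this
      have hinjc : ∀ x < L, ∀ y < L, cv x = cv y → x = y := by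
        intro x hx y hy h
        rw [hcv] at h
        simp only [if_pos hx, if_pos hy] at h
        have := hinj (i+x) (by omega) (i+y) (by omega) h
        omega
      have hLev : Even L := by
        have hsi := hside i (by omega)
        have hsm := hside m (le_refl m)
        have : (v i).isLeft = !(v m).isLeft := by rw [hiu, hul]
        rw [hsi, hsm] at this
        have hne := bool_opp this
        rw [Nat.even_iff]
        by_cases h1 : i % 2 = 0 <;> by_cases h2 : m % 2 = 0 <;>
          simp [h1, h2] at hne ⊢ <;> omega
      exact Or.inl (key_assemble hLm hEc (cycle_unique hinjc hclose hL3)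
        (fun u => Or.inl (cycle_vertex hEc hinjc hclose hL3 hLev u)))
    · -- extend the path
      push_neg at hu
      right
      set v' : ℕ → α ⊕ β := fun j => if j = m+1 then u else v j with hv'
      set E' : ℕ → α × β := fun j => if j = m then e' else E j with hE'
      have hv'at : ∀ j ≤ m, v' j = v j := by
        intro j hj
        rw [hv']
        simp only []
        rw [if_neg (by omega)]
      have hv'm1 : v' (m+1) = u := by rw [hv']; simp
      refine ⟨v', E', ?_, ?_, ?_, hv'at 0 (by omega)⟩
      · intro j hj
        by_cases hjm : j = m
        · have h1 : E' j = e' := by simp [hE', hjm]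
          refine ⟨h1 ▸ he'F, ?_⟩
          rw [h1, wcond_eq, hjm, hv'at m (le_refl m), hv'm1]
          exact hpair
        · have h1 : E' j = E j := by simp [hE', hjm]
          have hjm' : j < m := by omega
          refine ⟨h1 ▸ (hE j hjm').1, ?_⟩
          rw [h1, wcond_eq, hv'at j (by omega), hv'at (j+1) (by omega)]
          have := (hE j hjm').2
          rw [wcond_eq] at this
          exact this
      · intro x hx y hy h
        by_cases hxm : x = m + 1 <;> by_cases hym : y = m + 1
        · omega
        · rw [hxm, hv'm1, hv'at y (by omega)] at h
          exact absurd h.symm (hu y (by omega))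
        · rw [hym, hv'm1, hv'at x (by omega)] at h
          exact absurd h (hu x (by omega))
        · rw [hv'at x (by omega), hv'at y (by omega)] at h
          exact hinj x (by omega) y (by omega) h
      · intro j hj
        rw [hv'at 0 (by omega)]
        by_cases hjm : j = m + 1
        · rw [hjm, hv'm1, mod2_succ, bool_flip (p := decide (m % 2 = 0)) rfl, ← hside m (le_refl m), hul]
        · rw [hv'at j (by omega)]
          exact hside j (by omega)
  · -- dead end: v m is a leaf
    left
    have hmem : E (m-1) ∈ F.filter (fun e => tst (v m) e) := by
      refine Finset.mem_filter.2 ⟨(hE (m-1) hm1).1, mem_of_occ hE hm1 (Or.inr ?_)⟩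
      rw [hm1']
    have hfe : F.filter (fun e => tst (v m) e) = {E (m-1)} := by
      rcases (Finset.erase_eq_empty_iff _ _).1 (Finset.not_nonempty_iff_eq_empty.1 hC) with h | h
      · rw [h] at hmem; exact absurd hmem (Finset.notMem_empty _)
      · exact h
    have hleafm : IsLeaf F (v m) := by
      unfold IsLeaf
      rw [hfe]
      simp
    have hleaf0 : IsLeaf F (v 0) := by
      rcases hleaf with h | h
      · exact h
      · exact absurd hleafm (h (v m))
    exact key_assemble (by omega) hE (path_unique hinj)
      (path_vertex hE hinj hm hleaf0 hleafm)

lemma grow (F : Finset (α × β)) :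
    ∀ (k m : ℕ) (v : ℕ → α ⊕ β) (E : ℕ → α × β), 1 ≤ m →
    (∀ j < m, E j ∈ F ∧ wcond v (E j) j) →
    (∀ x ≤ m, ∀ y ≤ m, v x = v y → x = y) →
    (∀ j ≤ m, (v j).isLeft = ((v 0).isLeft == decide (j % 2 = 0))) →
    (IsLeaf F (v 0) ∨ ∀ u, ¬ IsLeaf F u) →
    Fintype.card (α ⊕ β) ≤ m + 1 + k →
    KeyGoal F := by
  intro k
  induction k with
  | zero =>
    intro m v E hm hE hinj hside hleaf hcard
    rcases step hm hE hinj hside hleaf with h | ⟨v', E', hE', hinj', hside', hv0⟩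
    · exact h
    · exfalso
      have hfinj : Function.Injective (fun j : Fin (m+2) => v' j) := by
        intro x y h
        exact Fin.ext (hinj' x (by omega) y (by omega) h)
      have := Fintype.card_le_of_injective _ hfinj
      rw [Fintype.card_fin] at this
      omega
  | succ k ih =>
    intro m v E hm hE hinj hside hleaf hcard
    rcases step hm hE hinj hside hleaf with h | ⟨v', E', hE', hinj', hside', hv0⟩
    · exact h
    · refine ih (m+1) v' E' (by omega) hE' hinj' hside' ?_ (by omega)
      rw [hv0]
      exact hleaf

lemma key (F : Finset (α × β)) (hF : F.Nonempty) : KeyGoal F := by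
  -- choose a starting edge and vertex
  have hmain : ∀ (x y : α ⊕ β) (e0 : α × β), e0 ∈ F → vpair x y e0 →
      (IsLeaf F x ∨ ∀ u, ¬ IsLeaf F u) → KeyGoal F := by
    intro x y e0 he0F hpair hleaf
    have hxy : y.isLeft = !x.isLeft := by
      rcases hpair with ⟨h1, h2⟩ | ⟨h1, h2⟩ <;> rw [h1, h2] <;> simp
    set v : ℕ → α ⊕ β := fun j => if j = 0 then x else y with hv
    have hv0 : v 0 = x := by simp [hv]
    have hv1 : v 1 = y := by simp [hv]
    refine grow F (Fintype.card (α ⊕ β)) 1 v (fun _ => e0) (le_refl 1) ?_ ?_ ?_ ?_ (by omega)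
    · intro j hj
      have : j = 0 := by omega
      rw [this]
      refine ⟨he0F, ?_⟩
      rw [wcond_eq, hv0, hv1]
      exact hpair
    · intro a ha b hb h
      have hne : x ≠ y := by
        intro hh
        rw [hh] at hxy
        exact absurd hxy (by cases y <;> simp)
      interval_cases a <;> interval_cases b
      · rfl
      · exact absurd (by rwa [hv0, hv1] at h) hne
      · exact absurd (by rw [hv0, hv1] at h; exact h.symm) hne
      · rfl
    · intro j hj
      interval_cases j
      · rw [hv0]; simp
      · rw [hv0, hv1, hxy]
        simp
    · rw [hv0]
      exact hleaf
  by_cases hL : ∃ u : α ⊕ β, IsLeaf F u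
  · obtain ⟨u, hu⟩ := hL
    have hne : (F.filter (fun e => tst u e)).Nonempty := by
      rw [← Finset.card_pos, hu]
      omega
    obtain ⟨e0, he0⟩ := hne
    have he0F : e0 ∈ F := (Finset.mem_filter.1 he0).1
    obtain ⟨u1, hul, hpair⟩ := far_vertex (Finset.mem_filter.1 he0).2
    exact hmain u u1 e0 he0F hpair (Or.inl hu)
  · push_neg at hL
    obtain ⟨e0, he0⟩ := hF
    exact hmain (Sum.inl e0.1) (Sum.inr e0.2) e0 he0 (Or.inl ⟨rfl, rfl⟩) (Or.inr hL)

end Walk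
section Main
variable {α β : Type*} [Fintype α] [Fintype β] [DecidableEq α] [DecidableEq β]

def MainP (E : Finset (α × β)) (x : α × β → ℝ) (μ : ((α × β) → Bool) → ℝ) : Prop :=
  (∀ X, 0 ≤ μ X) ∧ (∑ X : (α × β) → Bool, μ X = 1) ∧
  (∀ e ∈ E, ∑ X : (α × β) → Bool, μ X * (if X e then 1 else 0) = x e) ∧
  (∀ X : (α × β) → Bool, μ X ≠ 0 →
    (∀ a : α,
      ((E.filter (fun e => e.1 = a ∧ X e)).card : ℤ)
          = ⌊∑ e ∈ E.filter (fun e => e.1 = a), x e⌋ ∨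
      ((E.filter (fun e => e.1 = a ∧ X e)).card : ℤ)
          = ⌈∑ e ∈ E.filter (fun e => e.1 = a), x e⌉) ∧
    (∀ b : β,
      ((E.filter (fun e => e.2 = b ∧ X e)).card : ℤ)
          = ⌊∑ e ∈ E.filter (fun e => e.2 = b), x e⌋ ∨
      ((E.filter (fun e => e.2 = b ∧ X e)).card : ℤ)
          = ⌈∑ e ∈ E.filter (fun e => e.2 = b), x e⌉)) ∧
  (∀ c : Bool,
    (∀ (a : α) (S : Finset (α × β)), S ⊆ E.filter (fun e => e.1 = a) →
      ∑ X : (α × β) → Bool, μ X * (if ∀ e ∈ S, X e = c then 1 else 0)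
        ≤ ∏ e ∈ S, (if c then x e else 1 - x e)) ∧
    (∀ (b : β) (S : Finset (α × β)), S ⊆ E.filter (fun e => e.2 = b) →
      ∑ X : (α × β) → Bool, μ X * (if ∀ e ∈ S, X e = c then 1 else 0)
        ≤ ∏ e ∈ S, (if c then x e else 1 - x e)))

lemma dirac_expect {γ : Type*} [Fintype γ] [DecidableEq γ] (X0 : γ) (f : γ → ℝ) :
    ∑ X : γ, (if X = X0 then (1:ℝ) else 0) * f X = f X0 := by
  rw [Finset.sum_congr rfl (fun X _ => by rw [ite_mul, one_mul, zero_mul])]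
  rw [Finset.sum_ite_eq' Finset.univ X0 f, if_pos (Finset.mem_univ X0)]

lemma main_base (E : Finset (α × β)) (x : α × β → ℝ)
    (hint : ∀ e ∈ E, x e = 0 ∨ x e = 1) :
    ∃ μ : ((α × β) → Bool) → ℝ, MainP E x μ := by
  classical
  set X0 : (α × β) → Bool := fun e => decide (x e = 1) with hX0
  refine ⟨fun X => if X = X0 then 1 else 0, ?_, ?_, ?_, ?_, ?_⟩
  · intro X
    show 0 ≤ if X = X0 then (1:ℝ) else 0
    split <;> norm_num
  · rw [Finset.sum_ite_eq' Finset.univ X0 (fun _ => (1:ℝ)), if_pos (Finset.mem_univ X0)]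
  · intro e he
    rw [dirac_expect X0 (fun X => if X e then (1:ℝ) else 0)]
    rcases hint e he with h | h
    · rw [if_neg, h]
      rw [hX0]
      simp [h]
    · rw [if_pos, h]
      rw [hX0]
      simp [h]
  · intro X hX
    have hXX0 : X = X0 := by
      by_contra hne
      exact hX (if_neg hne)
    subst hXX0
    have key : ∀ (T : Finset (α × β)), (∀ e ∈ T, e ∈ E) →
        ((T.filter (fun e => X0 e)).card : ℤ) = ⌊∑ e ∈ T, x e⌋ ∧
        ((T.filter (fun e => X0 e)).card : ℤ) = ⌈∑ e ∈ T, x e⌉ := by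
      intro T hT
      have hsum : ∑ e ∈ T, x e = ((T.filter (fun e => X0 e)).card : ℝ) := by
        have hxe : ∀ e ∈ T, x e = (if X0 e then (1:ℝ) else 0) := by
          intro e he
          rcases hint e (hT e he) with h | h <;> rw [hX0] <;> simp [h]
        rw [Finset.sum_congr rfl hxe]
        simp [Finset.sum_boole]
      rw [hsum]
      constructor
      · rw [Int.floor_natCast]
      · rw [Int.ceil_natCast]
    constructor
    · intro a
      have h := key (E.filter (fun e => e.1 = a)) (fun e he => (Finset.mem_filter.1 he).1)
      rw [Finset.filter_filter] at h
      exact Or.inl h.1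
    · intro b
      have h := key (E.filter (fun e => e.2 = b)) (fun e he => (Finset.mem_filter.1 he).1)
      rw [Finset.filter_filter] at h
      exact Or.inl h.1
  · intro c
    have key : ∀ S : Finset (α × β), (∀ e ∈ S, e ∈ E) →
        ∑ X : (α × β) → Bool, (if X = X0 then (1:ℝ) else 0) * (if ∀ e ∈ S, X e = c then 1 else 0)
          ≤ ∏ e ∈ S, (if c then x e else 1 - x e) := by
      intro S hS
      rw [dirac_expect X0 (fun X => if ∀ e ∈ S, X e = c then (1:ℝ) else 0)]
      have hfac : ∀ e ∈ S, (if c then x e else 1 - x e) = (if X0 e = c then (1:ℝ) else 0) := by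
        intro e he
        rcases hint e (hS e he) with h | h <;> rcases c <;> rw [hX0] <;> simp [h]
      rw [Finset.prod_congr rfl hfac]
      by_cases hall : ∀ e ∈ S, X0 e = c
      · rw [if_pos hall, Finset.prod_congr rfl (fun e he => if_pos (hall e he)), Finset.prod_const_one]
      · rw [if_neg hall]
        apply Finset.prod_nonneg
        intro e he
        split <;> norm_num
    exact ⟨fun a S hS => key S (fun e he => (Finset.mem_filter.1 (hS he)).1),
           fun b S hS => key S (fun e he => (Finset.mem_filter.1 (hS he)).1)⟩

lemma quad_ineq (p q ep em A B : ℝ) (hp : 0 ≤ p) (hq : 0 ≤ q) (hpq : p + q = 1)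
    (hmix : p * ep = q * em) :
    p * ((A + ep) * (B - ep)) + q * ((A - em) * (B + em)) ≤ A * B := by
  have key : p * ((A + ep) * (B - ep)) + q * ((A - em) * (B + em))
      = A * B - (p * ep^2 + q * em^2) := by
    linear_combination (A * B) * hpq + (B - A) * hmix
  rw [key]
  nlinarith [mul_nonneg hp (sq_nonneg ep), mul_nonneg hq (sq_nonneg em)]

lemma combine {γ : Type*} [DecidableEq γ] {S : Finset γ} {pc pcp pcm : γ → ℝ} {p q : ℝ}
    (hp : 0 ≤ p) (hq : 0 ≤ q) (hpq : p + q = 1)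
    (hpc : ∀ e ∈ S, 0 ≤ pc e)
    {D : Finset γ} (hD : D ⊆ S) (hcard : D.card ≤ 2)
    (hsame : ∀ e ∈ S, e ∉ D → pcp e = pc e ∧ pcm e = pc e)
    (hmix : ∀ e ∈ D, p * pcp e + q * pcm e = pc e)
    (htwo : ∀ e1 ∈ D, ∀ e2 ∈ D, e1 ≠ e2 →
      p * (pcp e1 * pcp e2) + q * (pcm e1 * pcm e2) ≤ pc e1 * pc e2) :
    p * ∏ e ∈ S, pcp e + q * ∏ e ∈ S, pcm e ≤ ∏ e ∈ S, pc e := by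
  by_cases h0 : D.card = 0
  · have hD0 : D = ∅ := Finset.card_eq_zero.1 h0
    have h1 : ∏ e ∈ S, pcp e = ∏ e ∈ S, pc e :=
      Finset.prod_congr rfl (fun e he => (hsame e he (by simp [hD0])).1)
    have h2 : ∏ e ∈ S, pcm e = ∏ e ∈ S, pc e :=
      Finset.prod_congr rfl (fun e he => (hsame e he (by simp [hD0])).2)
    rw [h1, h2, ← add_mul, hpq, one_mul]
  by_cases h1c : D.card = 1
  · obtain ⟨e1, hD1⟩ := Finset.card_eq_one.1 h1c
    have he1D : e1 ∈ D := by rw [hD1]; exact Finset.mem_singleton_self e1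
    have he1S : e1 ∈ S := hD he1D
    have hrest : ∀ e ∈ S.erase e1, pcp e = pc e ∧ pcm e = pc e := by
      intro e he
      obtain ⟨hne, heS⟩ := Finset.mem_erase.1 he
      exact hsame e heS (by rw [hD1]; simp [hne])
    have hpp : ∏ e ∈ S, pcp e = pcp e1 * ∏ e ∈ S.erase e1, pc e := by
      rw [← Finset.mul_prod_erase S pcp he1S]
      exact congrArg _ (Finset.prod_congr rfl (fun e he => (hrest e he).1))
    have hpm : ∏ e ∈ S, pcm e = pcm e1 * ∏ e ∈ S.erase e1, pc e := by
      rw [← Finset.mul_prod_erase S pcm he1S]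
      exact congrArg _ (Finset.prod_congr rfl (fun e he => (hrest e he).2))
    have hpc' : ∏ e ∈ S, pc e = pc e1 * ∏ e ∈ S.erase e1, pc e :=
      (Finset.mul_prod_erase S pc he1S).symm
    rw [hpp, hpm, hpc']
    have := hmix e1 he1D
    apply le_of_eq
    calc p * (pcp e1 * ∏ e ∈ S.erase e1, pc e) + q * (pcm e1 * ∏ e ∈ S.erase e1, pc e)
        = (p * pcp e1 + q * pcm e1) * ∏ e ∈ S.erase e1, pc e := by ring
      _ = pc e1 * ∏ e ∈ S.erase e1, pc e := by rw [this]
  have h2c : D.card = 2 := by omega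
  obtain ⟨e1, e2, hne, hD2⟩ := Finset.card_eq_two.1 h2c
  have he1D : e1 ∈ D := by rw [hD2]; simp
  have he2D : e2 ∈ D := by rw [hD2]; simp
  have he1S : e1 ∈ S := hD he1D
  have he2S : e2 ∈ S := hD he2D
  have he2S' : e2 ∈ S.erase e1 := Finset.mem_erase.2 ⟨hne.symm, he2S⟩
  have hrest : ∀ e ∈ (S.erase e1).erase e2, pcp e = pc e ∧ pcm e = pc e := by
    intro e he
    obtain ⟨hne2, he'⟩ := Finset.mem_erase.1 he
    obtain ⟨hne1, heS⟩ := Finset.mem_erase.1 he'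
    exact hsame e heS (by rw [hD2]; simp [hne1, hne2])
  have hpp : ∏ e ∈ S, pcp e = pcp e1 * (pcp e2 * ∏ e ∈ (S.erase e1).erase e2, pc e) := by
    rw [← Finset.mul_prod_erase S pcp he1S, ← Finset.mul_prod_erase (S.erase e1) pcp he2S']
    exact congrArg _ (congrArg _ (Finset.prod_congr rfl (fun e he => (hrest e he).1)))
  have hpm : ∏ e ∈ S, pcm e = pcm e1 * (pcm e2 * ∏ e ∈ (S.erase e1).erase e2, pc e) := by
    rw [← Finset.mul_prod_erase S pcm he1S, ← Finset.mul_prod_erase (S.erase e1) pcm he2S']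
    exact congrArg _ (congrArg _ (Finset.prod_congr rfl (fun e he => (hrest e he).2)))
  have hpc' : ∏ e ∈ S, pc e = pc e1 * (pc e2 * ∏ e ∈ (S.erase e1).erase e2, pc e) := by
    rw [← Finset.mul_prod_erase S pc he1S, ← Finset.mul_prod_erase (S.erase e1) pc he2S']
  have hR : 0 ≤ ∏ e ∈ (S.erase e1).erase e2, pc e := by
    apply Finset.prod_nonneg
    intro e he
    exact hpc e (Finset.mem_of_mem_erase (Finset.mem_of_mem_erase he))
  rw [hpp, hpm, hpc']
  have h2 := htwo e1 he1D e2 he2D hne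
  calc p * (pcp e1 * (pcp e2 * ∏ e ∈ (S.erase e1).erase e2, pc e))
        + q * (pcm e1 * (pcm e2 * ∏ e ∈ (S.erase e1).erase e2, pc e))
      = (p * (pcp e1 * pcp e2) + q * (pcm e1 * pcm e2)) * ∏ e ∈ (S.erase e1).erase e2, pc e := by
        ring
    _ ≤ (pc e1 * pc e2) * ∏ e ∈ (S.erase e1).erase e2, pc e :=
        mul_le_mul_of_nonneg_right h2 hR
    _ = pc e1 * (pc e2 * ∏ e ∈ (S.erase e1).erase e2, pc e) := by ring


lemma floor_ceil_pin {y : ℝ} {k : ℤ} (h1 : (k:ℝ) ≤ y) (h2 : y ≤ (k:ℝ) + 1) :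
    (⌊y⌋ = k ∨ ⌊y⌋ = k + 1) ∧ (⌈y⌉ = k ∨ ⌈y⌉ = k + 1) := by
  have hf1 : k ≤ ⌊y⌋ := Int.le_floor.2 h1
  have hf2 : ⌊y⌋ ≤ k + 1 := by
    have h : ⌊y⌋ ≤ ⌊((k+1 : ℤ) : ℝ)⌋ := Int.floor_le_floor (by push_cast; linarith)
    rwa [Int.floor_intCast] at h
  have hc2 : ⌈y⌉ ≤ k + 1 := by
    have h : ⌈y⌉ ≤ ⌈((k+1 : ℤ) : ℝ)⌉ := Int.ceil_le_ceil (by push_cast; linarith)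
    rwa [Int.ceil_intCast] at h
  have hc1 : k ≤ ⌈y⌉ := le_trans hf1 (Int.floor_le_ceil y)
  omega

lemma P2transfer (E F : Finset (α × β)) (x xs : α × β → ℝ) (g : α × β → ℤ) (t : ℝ)
    (P : α × β → Prop) [DecidablePred P]
    (hFE : F ⊆ E)
    (hF : ∀ e, e ∈ F ↔ (e ∈ E ∧ (0 < x e ∧ x e < 1)))
    (hxs : ∀ e, xs e = x e + t * (g e : ℝ))
    (hxsb : ∀ e ∈ E, 0 ≤ xs e ∧ xs e ≤ 1)
    (hx : ∀ e ∈ E, 0 ≤ x e ∧ x e ≤ 1)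
    (hgF : ∀ e, g e ≠ 0 → e ∈ F)
    (hvert : (∑ e ∈ F.filter P, g e = 0) ∨ (F.filter P).card = 1)
    (n : ℤ)
    (hn : n = ⌊∑ e ∈ E.filter P, xs e⌋ ∨ n = ⌈∑ e ∈ E.filter P, xs e⌉) :
    n = ⌊∑ e ∈ E.filter P, x e⌋ ∨ n = ⌈∑ e ∈ E.filter P, x e⌉ := by
  rcases hvert with hsum0 | hcard1
  · have hsub : F.filter P ⊆ E.filter P := Finset.filter_subset_filter P hFE
    have hgz : ∀ e ∈ E.filter P, e ∉ F.filter P → g e = 0 := by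
      intro e he hef
      by_contra hne
      exact hef (Finset.mem_filter.2 ⟨hgF e hne, (Finset.mem_filter.1 he).2⟩)
    have h1 : ∑ e ∈ E.filter P, g e = 0 := by
      rw [← Finset.sum_subset hsub hgz]
      exact hsum0
    have h2 : ∑ e ∈ E.filter P, xs e = ∑ e ∈ E.filter P, x e := by
      rw [Finset.sum_congr rfl (fun e _ => hxs e), Finset.sum_add_distrib, ← Finset.mul_sum]
      have hcast : ∑ e ∈ E.filter P, (g e : ℝ) = 0 := by
        have := congrArg (fun z : ℤ => (z : ℝ)) h1
        push_cast at this
        exact this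
      rw [hcast, mul_zero, add_zero]
    rwa [h2] at hn
  · obtain ⟨e0, he0⟩ := Finset.card_eq_one.1 hcard1
    have he0m : e0 ∈ F.filter P := by rw [he0]; exact Finset.mem_singleton_self e0
    have he0F : e0 ∈ F := (Finset.mem_filter.1 he0m).1
    have he0P : P e0 := (Finset.mem_filter.1 he0m).2
    have he0E : e0 ∈ E := hFE he0F
    have he0T : e0 ∈ E.filter P := Finset.mem_filter.2 ⟨he0E, he0P⟩
    have hfrac := ((hF e0).1 he0F).2
    have hint : ∀ e ∈ (E.filter P).erase e0, x e = 0 ∨ x e = 1 := by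
      intro e he
      obtain ⟨hne, heT⟩ := Finset.mem_erase.1 he
      obtain ⟨heE, hPe⟩ := Finset.mem_filter.1 heT
      rcases hx e heE with ⟨h0, h1⟩
      by_contra hcon
      push_neg at hcon
      have hmem : e ∈ F.filter P := Finset.mem_filter.2
        ⟨(hF e).2 ⟨heE, lt_of_le_of_ne h0 (Ne.symm hcon.1), lt_of_le_of_ne h1 hcon.2⟩, hPe⟩
      rw [he0] at hmem
      exact hne (Finset.mem_singleton.1 hmem)
    have hgz : ∀ e ∈ (E.filter P).erase e0, g e = 0 := by
      intro e he
      obtain ⟨hne, heT⟩ := Finset.mem_erase.1 he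
      by_contra hgne
      have hmem : e ∈ F.filter P :=
        Finset.mem_filter.2 ⟨hgF e hgne, (Finset.mem_filter.1 heT).2⟩
      rw [he0] at hmem
      exact hne (Finset.mem_singleton.1 hmem)
    set k := (((E.filter P).erase e0).filter (fun e => x e = 1)).card with hk
    have hsum_int : ∑ e ∈ (E.filter P).erase e0, x e = (k : ℝ) := by
      have hxe : ∀ e ∈ (E.filter P).erase e0, x e = (if x e = 1 then (1:ℝ) else 0) := by
        intro e he
        rcases hint e he with h | h <;> simp [h]
      rw [Finset.sum_congr rfl hxe]
      simp [Finset.sum_boole, hk]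
    have hS : ∑ e ∈ E.filter P, x e = x e0 + (k:ℝ) := by
      rw [← Finset.add_sum_erase _ x he0T, hsum_int]
    have hSs : ∑ e ∈ E.filter P, xs e = xs e0 + (k:ℝ) := by
      rw [← Finset.add_sum_erase _ xs he0T]
      have hxeq : ∀ e ∈ (E.filter P).erase e0, xs e = x e := by
        intro e he
        rw [hxs e, hgz e he]
        simp
      rw [Finset.sum_congr rfl hxeq, hsum_int]
    have hfloor : ⌊∑ e ∈ E.filter P, x e⌋ = (k : ℤ) := by
      rw [hS, Int.floor_eq_iff]
      constructor <;> push_cast <;> linarith [hfrac.1, hfrac.2]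
    have hceil : ⌈∑ e ∈ E.filter P, x e⌉ = (k : ℤ) + 1 := by
      rw [hS, Int.ceil_eq_iff]
      constructor <;> push_cast <;> linarith [hfrac.1, hfrac.2]
    have hb := hxsb e0 he0E
    have hpin := floor_ceil_pin (y := ∑ e ∈ E.filter P, xs e) (k := (k:ℤ))
      (by rw [hSs]; push_cast; linarith [hb.1]) (by rw [hSs]; push_cast; linarith [hb.2])
    rw [hfloor, hceil]
    rcases hpin with ⟨hp1, hp2⟩
    rcases hn with hn | hn <;> rcases hp1 with h | h <;> rcases hp2 with h' | h' <;> omega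

lemma P3transfer (E F : Finset (α × β)) (x : α × β → ℝ) (g : α × β → ℤ) (ep em p q : ℝ)
    (xp xm : α × β → ℝ) (c : Bool)
    (hp : 0 ≤ p) (hq : 0 ≤ q) (hpq : p + q = 1) (hmix0 : p * ep = q * em)
    (hxp : ∀ e, xp e = x e + ep * (g e : ℝ)) (hxm : ∀ e, xm e = x e - em * (g e : ℝ))
    (hx : ∀ e ∈ E, 0 ≤ x e ∧ x e ≤ 1)
    (hgF : ∀ e, g e ≠ 0 → e ∈ F) (hg01 : ∀ e, g e = 0 ∨ g e = 1 ∨ g e = -1)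
    (P : α × β → Prop) [DecidablePred P] (hFE : F ⊆ E)
    (hvert : (((F.filter P).filter (fun e => g e ≠ 0)).card ≤ 2 ∧ ∑ e ∈ F.filter P, g e = 0)
      ∨ (F.filter P).card = 1)
    (S : Finset (α × β)) (hS : S ⊆ E.filter P) :
    p * ∏ e ∈ S, (if c then xp e else 1 - xp e) + q * ∏ e ∈ S, (if c then xm e else 1 - xm e)
      ≤ ∏ e ∈ S, (if c then x e else 1 - x e) := by
  have hSE : ∀ e ∈ S, e ∈ E := fun e he => (Finset.mem_filter.1 (hS he)).1
  have hSP : ∀ e ∈ S, P e := fun e he => (Finset.mem_filter.1 (hS he)).2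
  set D := S.filter (fun e => g e ≠ 0) with hDdef
  have hDW : D ⊆ (F.filter P).filter (fun e => g e ≠ 0) := by
    intro e he
    obtain ⟨heS, hg⟩ := Finset.mem_filter.1 he
    exact Finset.mem_filter.2 ⟨Finset.mem_filter.2 ⟨hgF e hg, hSP e heS⟩, hg⟩
  have hmixc' : p * ep - q * em = 0 := by linarith
  refine combine hp hq hpq ?_ (D := D) (Finset.filter_subset _ _) ?_ ?_ ?_ ?_
  · intro e he
    rcases hx e (hSE e he) with ⟨h0, h1⟩
    cases c
    · show (0:ℝ) ≤ 1 - x e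
      linarith
    · show (0:ℝ) ≤ x e
      linarith
  · rcases hvert with ⟨hW2, _⟩ | h1c
    · exact le_trans (Finset.card_le_card hDW) hW2
    · have := Finset.card_le_card (hDW.trans (Finset.filter_subset _ _))
      omega
  · intro e heS heD
    have hg0 : g e = 0 := by
      by_contra h
      exact heD (Finset.mem_filter.2 ⟨heS, h⟩)
    constructor <;> cases c <;>
      simp [hxp e, hxm e, hg0]
  · intro e heD
    cases c
    · show p * (1 - xp e) + q * (1 - xm e) = 1 - x e
      rw [hxp e, hxm e]
      linear_combination (1 - x e) * hpq - (g e : ℝ) * hmixc'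
    · show p * xp e + q * xm e = x e
      rw [hxp e, hxm e]
      linear_combination x e * hpq + (g e : ℝ) * hmixc'
  · intro e1 he1 e2 he2 hne
    have hg1ne : g e1 ≠ 0 := (Finset.mem_filter.1 he1).2
    have hg2ne : g e2 ≠ 0 := (Finset.mem_filter.1 he2).2
    have hg12 : g e1 + g e2 = 0 := by
      rcases hvert with ⟨hW2, hsum0⟩ | h1c
      · have h12W : ({e1, e2} : Finset (α × β)) ⊆ (F.filter P).filter (fun e => g e ≠ 0) := by
          intro e he
          rcases Finset.mem_insert.1 he with rfl | h
          · exact hDW he1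
          · rw [Finset.mem_singleton.1 h]
            exact hDW he2
        have hc12 : ({e1, e2} : Finset (α × β)).card = 2 := by
          rw [Finset.card_insert_of_notMem (by simp [hne]), Finset.card_singleton]
        have hWeq := Finset.eq_of_subset_of_card_le h12W (by rw [hc12]; exact hW2)
        have hsplit := Finset.sum_filter_add_sum_filter_not (F.filter P) (fun e => g e ≠ 0) g
        have hz : ∑ e ∈ (F.filter P).filter (fun e => ¬ g e ≠ 0), g e = 0 :=
          Finset.sum_eq_zero (fun e he => not_not.1 (Finset.mem_filter.1 he).2)
        rw [hz, add_zero, hsum0] at hsplit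
        rw [← hWeq, Finset.sum_insert (by simp [hne]), Finset.sum_singleton] at hsplit
        exact hsplit
      · exfalso
        have h2le : 1 < D.card := Finset.one_lt_card.2 ⟨e1, he1, e2, he2, hne⟩
        have := Finset.card_le_card (hDW.trans (Finset.filter_subset _ _))
        omega
    rcases hg01 e1 with h1 | h1 | h1
    · exact absurd h1 hg1ne
    · have h2 : g e2 = -1 := by omega
      cases c
      · show p * ((1 - xp e1) * (1 - xp e2)) + q * ((1 - xm e1) * (1 - xm e2))
            ≤ (1 - x e1) * (1 - x e2)
        rw [hxp e1, hxp e2, hxm e1, hxm e2, h1, h2]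
        push_cast
        linarith [quad_ineq p q ep em (1 - x e2) (1 - x e1) hp hq hpq hmix0]
      · show p * (xp e1 * xp e2) + q * (xm e1 * xm e2) ≤ x e1 * x e2
        rw [hxp e1, hxp e2, hxm e1, hxm e2, h1, h2]
        push_cast
        linarith [quad_ineq p q ep em (x e1) (x e2) hp hq hpq hmix0]
    · have h2 : g e2 = 1 := by omega
      cases c
      · show p * ((1 - xp e1) * (1 - xp e2)) + q * ((1 - xm e1) * (1 - xm e2))
            ≤ (1 - x e1) * (1 - x e2)
        rw [hxp e1, hxp e2, hxm e1, hxm e2, h1, h2]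
        push_cast
        linarith [quad_ineq p q ep em (1 - x e1) (1 - x e2) hp hq hpq hmix0]
      · show p * (xp e1 * xp e2) + q * (xm e1 * xm e2) ≤ x e1 * x e2
        rw [hxp e1, hxp e2, hxm e1, hxm e2, h1, h2]
        push_cast
        linarith [quad_ineq p q ep em (x e2) (x e1) hp hq hpq hmix0]

end Main

section MainProof
variable {α β : Type*} [Fintype α] [Fintype β] [DecidableEq α] [DecidableEq β]

lemma mix_expect {γ : Type*} [Fintype γ] (μp μm : γ → ℝ) (p q : ℝ) (f : γ → ℝ) :
    ∑ X : γ, (p * μp X + q * μm X) * f X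
      = p * ∑ X : γ, μp X * f X + q * ∑ X : γ, μm X * f X := by
  rw [Finset.mul_sum, Finset.mul_sum, ← Finset.sum_add_distrib]
  exact Finset.sum_congr rfl (fun X _ => by ring)

lemma main (E : Finset (α × β)) : ∀ (n : ℕ) (x : α × β → ℝ),
    (∀ e ∈ E, 0 ≤ x e ∧ x e ≤ 1) →
    (E.filter (fun e => 0 < x e ∧ x e < 1)).card ≤ n →
    ∃ μ, MainP E x μ := by
  intro n
  induction n with
  | zero =>
    intro x hx hcard
    apply main_base
    intro e he
    rcases hx e he with ⟨h0, h1⟩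
    by_contra hcon
    push_neg at hcon
    have hmem : e ∈ E.filter (fun e => 0 < x e ∧ x e < 1) :=
      Finset.mem_filter.2 ⟨he, lt_of_le_of_ne h0 (Ne.symm hcon.1), lt_of_le_of_ne h1 hcon.2⟩
    have := Finset.card_pos.2 ⟨e, hmem⟩
    omega
  | succ n ih =>
    intro x hx hcard
    by_cases hFne : (E.filter (fun e => 0 < x e ∧ x e < 1)).Nonempty
    swap
    · apply main_base
      intro e he
      rcases hx e he with ⟨h0, h1⟩
      by_contra hcon
      push_neg at hcon
      exact hFne ⟨e, Finset.mem_filter.2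
        ⟨he, lt_of_le_of_ne h0 (Ne.symm hcon.1), lt_of_le_of_ne h1 hcon.2⟩⟩
    set F := E.filter (fun e => 0 < x e ∧ x e < 1) with hFdef
    have hFE : F ⊆ E := Finset.filter_subset _ _
    have hFiff : ∀ e, e ∈ F ↔ (e ∈ E ∧ (0 < x e ∧ x e < 1)) := fun e => Finset.mem_filter
    obtain ⟨g, hg1, hg2, hg3, hg4, hg5⟩ := key F hFne
    set D0 := F.filter (fun e => g e ≠ 0) with hD0def
    have hD0ne : D0.Nonempty := by
      obtain ⟨e, he⟩ := hg3
      exact ⟨e, Finset.mem_filter.2 ⟨hg1 e he, he⟩⟩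
    have hfracD : ∀ e ∈ D0, 0 < x e ∧ x e < 1 := fun e he =>
      (Finset.mem_filter.1 (Finset.mem_filter.1 he).1).2
    set fp : α × β → ℝ := fun e => if g e = 1 then 1 - x e else x e with hfpdef
    set fm : α × β → ℝ := fun e => if g e = 1 then x e else 1 - x e with hfmdef
    set ep := D0.inf' hD0ne fp with hepdef
    set em := D0.inf' hD0ne fm with hemdef
    have hep : 0 < ep := by
      rw [hepdef]
      rw [Finset.lt_inf'_iff]
      intro e he
      rcases hfracD e he with ⟨ha, hb⟩
      by_cases h : g e = 1
      · simp only [hfpdef, if_pos h]; linarith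
      · simp only [hfpdef, if_neg h]; linarith
    have hem : 0 < em := by
      rw [hemdef]
      rw [Finset.lt_inf'_iff]
      intro e he
      rcases hfracD e he with ⟨ha, hb⟩
      by_cases h : g e = 1
      · simp only [hfmdef, if_pos h]; linarith
      · simp only [hfmdef, if_neg h]; linarith
    set xp : α × β → ℝ := fun e => x e + ep * (g e : ℝ) with hxpdef
    set xm : α × β → ℝ := fun e => x e - em * (g e : ℝ) with hxmdef
    have hxpe : ∀ e, xp e = x e + ep * (g e : ℝ) := fun e => by rw [hxpdef]
    have hxme : ∀ e, xm e = x e - em * (g e : ℝ) := fun e => by rw [hxmdef]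
    have hmemD0 : ∀ e, g e ≠ 0 → e ∈ D0 := fun e hgne =>
      Finset.mem_filter.2 ⟨hg1 e hgne, hgne⟩
    have hxpb : ∀ e ∈ E, 0 ≤ xp e ∧ xp e ≤ 1 := by
      intro e he
      rw [hxpe e]
      rcases hg2 e with h | h | h
      · rw [h]
        push_cast
        rcases hx e he with ⟨h0, h1⟩
        constructor <;> linarith
      · have heD : e ∈ D0 := hmemD0 e (by rw [h]; exact one_ne_zero)
        have hle : ep ≤ fp e := Finset.inf'_le fp heD
        rw [hfpdef] at hle
        simp only [if_pos h] at hle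
        rw [h]
        push_cast
        rcases hx e he with ⟨h0, h1⟩
        constructor <;> linarith
      · have heD : e ∈ D0 := hmemD0 e (by rw [h]; norm_num)
        have hle : ep ≤ fp e := Finset.inf'_le fp heD
        rw [hfpdef] at hle
        simp only [if_neg (by omega : ¬ g e = 1)] at hle
        rw [h]
        push_cast
        rcases hx e he with ⟨h0, h1⟩
        constructor <;> linarith
    have hxmb : ∀ e ∈ E, 0 ≤ xm e ∧ xm e ≤ 1 := by
      intro e he
      rw [hxme e]
      rcases hg2 e with h | h | h
      · rw [h]
        push_cast
        rcases hx e he with ⟨h0, h1⟩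
        constructor <;> linarith
      · have heD : e ∈ D0 := hmemD0 e (by rw [h]; exact one_ne_zero)
        have hle : em ≤ fm e := Finset.inf'_le fm heD
        rw [hfmdef] at hle
        simp only [if_pos h] at hle
        rw [h]
        push_cast
        rcases hx e he with ⟨h0, h1⟩
        constructor <;> linarith
      · have heD : e ∈ D0 := hmemD0 e (by rw [h]; norm_num)
        have hle : em ≤ fm e := Finset.inf'_le fm heD
        rw [hfmdef] at hle
        simp only [if_neg (by omega : ¬ g e = 1)] at hle
        rw [h]
        push_cast
        rcases hx e he with ⟨h0, h1⟩
        constructor <;> linarith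
    -- the fractional support shrinks for both xp and xm
    have hshrink : ∀ (y : α × β → ℝ), (∀ e, g e = 0 → y e = x e) →
        (∃ estar ∈ D0, y estar = 0 ∨ y estar = 1) →
        (E.filter (fun e => 0 < y e ∧ y e < 1)).card ≤ n := by
      intro y hy ⟨estar, hestar, hstar⟩
      have hsub : E.filter (fun e => 0 < y e ∧ y e < 1) ⊆ F.erase estar := by
        intro e he
        obtain ⟨heE, hfr⟩ := Finset.mem_filter.1 he
        have heF : e ∈ F := by
          by_cases hgz : g e = 0
          · rw [hy e hgz] at hfr
            exact Finset.mem_filter.2 ⟨heE, hfr⟩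
          · exact hg1 e hgz
        refine Finset.mem_erase.2 ⟨?_, heF⟩
        intro heq
        rw [heq] at hfr
        rcases hstar with h | h <;> rw [h] at hfr <;> rcases hfr with ⟨hA, hB⟩ <;> linarith
      have h1 := Finset.card_le_card hsub
      have h2 : (F.erase estar).card = F.card - 1 :=
        Finset.card_erase_of_mem (Finset.mem_filter.1 hestar).1
      have h3 : 0 < F.card := Finset.card_pos.2 hFne
      omega
    have hcardp : (E.filter (fun e => 0 < xp e ∧ xp e < 1)).card ≤ n := by
      apply hshrink
      · intro e hgz
        rw [hxpe e, hgz]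
        push_cast
        ring
      · obtain ⟨estar, hestar, hesteq⟩ := Finset.exists_mem_eq_inf' hD0ne fp
        have hepeq : ep = fp estar := by rw [hepdef]; exact hesteq
        refine ⟨estar, hestar, ?_⟩
        have hgne : g estar ≠ 0 := (Finset.mem_filter.1 hestar).2
        rcases hg2 estar with h | h | h
        · exact absurd h hgne
        · right
          have hfpe : fp estar = 1 - x estar := by simp only [hfpdef]; rw [if_pos h]
          rw [hxpe estar, h, hepeq, hfpe]
          push_cast
          ring
        · left
          have hfpe : fp estar = x estar := by
            simp only [hfpdef]; rw [if_neg (by omega : ¬ g estar = 1)]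
          rw [hxpe estar, h, hepeq, hfpe]
          push_cast
          ring
    have hcardm : (E.filter (fun e => 0 < xm e ∧ xm e < 1)).card ≤ n := by
      apply hshrink
      · intro e hgz
        rw [hxme e, hgz]
        push_cast
        ring
      · obtain ⟨estar, hestar, hesteq⟩ := Finset.exists_mem_eq_inf' hD0ne fm
        have hemeq : em = fm estar := by rw [hemdef]; exact hesteq
        refine ⟨estar, hestar, ?_⟩
        have hgne : g estar ≠ 0 := (Finset.mem_filter.1 hestar).2
        rcases hg2 estar with h | h | h
        · exact absurd h hgne
        · left
          have hfme : fm estar = x estar := by simp only [hfmdef]; rw [if_pos h]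
          rw [hxme estar, h, hemeq, hfme]
          push_cast
          ring
        · right
          have hfme : fm estar = 1 - x estar := by
            simp only [hfmdef]; rw [if_neg (by omega : ¬ g estar = 1)]
          rw [hxme estar, h, hemeq, hfme]
          push_cast
          ring
    obtain ⟨μp, hμp⟩ := ih xp hxpb hcardp
    obtain ⟨μm, hμm⟩ := ih xm hxmb hcardm
    obtain ⟨hp0, hp1, hpP1, hpP2, hpP3⟩ := hμp
    obtain ⟨hm0, hm1, hmP1, hmP2, hmP3⟩ := hμm
    set p := em / (ep + em) with hpdef
    set q := ep / (ep + em) with hqdef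
    have hepem : 0 < ep + em := by linarith
    have hp : 0 ≤ p := le_of_lt (div_pos hem hepem)
    have hq : 0 ≤ q := le_of_lt (div_pos hep hepem)
    have hpq : p + q = 1 := by
      rw [hpdef, hqdef, ← add_div, add_comm em ep, div_self (ne_of_gt hepem)]
    have hmix0 : p * ep = q * em := by
      rw [hpdef, hqdef]
      ring
    have hmixc' : p * ep - q * em = 0 := by linarith
    set μ : ((α × β) → Bool) → ℝ := fun X => p * μp X + q * μm X with hμdef
    have hrw : ∀ f : ((α × β) → Bool) → ℝ,
        ∑ X : (α × β) → Bool, μ X * f X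
          = p * ∑ X : (α × β) → Bool, μp X * f X + q * ∑ X : (α × β) → Bool, μm X * f X := by
      intro f
      simp only [hμdef]
      exact mix_expect μp μm p q f
    refine ⟨μ, ?_, ?_, ?_, ?_, ?_⟩
    · intro X
      rw [hμdef]
      exact add_nonneg (mul_nonneg hp (hp0 X)) (mul_nonneg hq (hm0 X))
    · simp only [hμdef]
      rw [Finset.sum_add_distrib, ← Finset.mul_sum, ← Finset.mul_sum, hp1, hm1,
        mul_one, mul_one]
      exact hpq
    · intro e he
      rw [hrw (fun X => if X e then (1:ℝ) else 0), hpP1 e he, hmP1 e he,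
        hxpe e, hxme e]
      linear_combination x e * hpq + (g e : ℝ) * hmixc'
    · intro X hX
      have hor : μp X ≠ 0 ∨ μm X ≠ 0 := by
        by_contra hcon
        push_neg at hcon
        apply hX
        rw [hμdef]
        show p * μp X + q * μm X = 0
        rw [hcon.1, hcon.2]
        ring
      rcases hor with hs | hs
      · obtain ⟨hPa, hPb⟩ := hpP2 X hs
        constructor
        · intro a
          exact P2transfer E F x xp g ep (fun e => e.1 = a) hFE hFiff hxpe hxpb hx hg1
            ((hg4 a).imp And.right id) _ (hPa a)
        · intro b
          exact P2transfer E F x xp g ep (fun e => e.2 = b) hFE hFiff hxpe hxpb hx hg1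
            ((hg5 b).imp And.right id) _ (hPb b)
      · obtain ⟨hPa, hPb⟩ := hmP2 X hs
        have hxme' : ∀ e, xm e = x e + (-em) * (g e : ℝ) := by
          intro e
          rw [hxme e]
          ring
        constructor
        · intro a
          exact P2transfer E F x xm g (-em) (fun e => e.1 = a) hFE hFiff hxme' hxmb hx hg1
            ((hg4 a).imp And.right id) _ (hPa a)
        · intro b
          exact P2transfer E F x xm g (-em) (fun e => e.2 = b) hFE hFiff hxme' hxmb hx hg1
            ((hg5 b).imp And.right id) _ (hPb b)
    · intro c
      constructor
      · intro a S hS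
        rw [hrw (fun X => if ∀ e ∈ S, X e = c then (1:ℝ) else 0)]
        have h1 := (hpP3 c).1 a S hS
        have h2 := (hmP3 c).1 a S hS
        have h3 := P3transfer E F x g ep em p q xp xm c hp hq hpq hmix0 hxpe hxme hx hg1
          hg2 (fun e => e.1 = a) hFE (hg4 a) S hS
        calc p * (∑ X : (α × β) → Bool, μp X * (if ∀ e ∈ S, X e = c then 1 else 0))
              + q * (∑ X : (α × β) → Bool, μm X * (if ∀ e ∈ S, X e = c then 1 else 0))
            ≤ p * ∏ e ∈ S, (if c then xp e else 1 - xp e)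
              + q * ∏ e ∈ S, (if c then xm e else 1 - xm e) :=
              add_le_add (mul_le_mul_of_nonneg_left h1 hp) (mul_le_mul_of_nonneg_left h2 hq)
          _ ≤ ∏ e ∈ S, (if c then x e else 1 - x e) := h3
      · intro b S hS
        rw [hrw (fun X => if ∀ e ∈ S, X e = c then (1:ℝ) else 0)]
        have h1 := (hpP3 c).2 b S hS
        have h2 := (hmP3 c).2 b S hS
        have h3 := P3transfer E F x g ep em p q xp xm c hp hq hpq hmix0 hxpe hxme hx hg1
          hg2 (fun e => e.2 = b) hFE (hg5 b) S hS
        calc p * (∑ X : (α × β) → Bool, μp X * (if ∀ e ∈ S, X e = c then 1 else 0))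
              + q * (∑ X : (α × β) → Bool, μm X * (if ∀ e ∈ S, X e = c then 1 else 0))
            ≤ p * ∏ e ∈ S, (if c then xp e else 1 - xp e)
              + q * ∏ e ∈ S, (if c then xm e else 1 - xm e) :=
              add_le_add (mul_le_mul_of_nonneg_left h1 hp) (mul_le_mul_of_nonneg_left h2 hq)
          _ ≤ ∏ e ∈ S, (if c then x e else 1 - x e) := h3

end MainProof

/-- GKPS dependent rounding. For any finite bipartite graph
with edge set `E` and any `x : E → [0,1]`, there is a finitely supported
probability distribution μ over integral vectors `X : E → {0,1}` satisfying:
(P1) marginals: Pr(X_e = 1) = x_e for every edge e ∈ E;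
(P2) degree preservation: with probability 1, every vertex's integral degree
is the floor or the ceiling of its fractional degree;
(P3) negative correlation: for every vertex a, every subset S of the edges of
E incident to a, and every c ∈ {0,1},
Pr(∀ e ∈ S, X_e = c) ≤ Π_{e∈S} Pr(X_e = c). -/
theorem stmt1 {α β : Type*} [Fintype α] [Fintype β] [DecidableEq α] [DecidableEq β]
    (E : Finset (α × β)) (x : α × β → ℝ)
    (hx01 : ∀ e ∈ E, 0 ≤ x e ∧ x e ≤ 1) :
    ∃ μ : ((α × β) → Bool) → ℝ,
      (∀ X, 0 ≤ μ X) ∧ (∑ X : (α × β) → Bool, μ X = 1) ∧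
      -- (P1) marginals
      (∀ e ∈ E, ∑ X : (α × β) → Bool, μ X * (if X e then 1 else 0) = x e) ∧
      -- (P2) degree preservation
      (∀ X : (α × β) → Bool, μ X ≠ 0 →
        (∀ a : α,
          ((E.filter (fun e => e.1 = a ∧ X e)).card : ℤ)
              = ⌊∑ e ∈ E.filter (fun e => e.1 = a), x e⌋ ∨
          ((E.filter (fun e => e.1 = a ∧ X e)).card : ℤ)
              = ⌈∑ e ∈ E.filter (fun e => e.1 = a), x e⌉) ∧
        (∀ b : β,
          ((E.filter (fun e => e.2 = b ∧ X e)).card : ℤ)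
              = ⌊∑ e ∈ E.filter (fun e => e.2 = b), x e⌋ ∨
          ((E.filter (fun e => e.2 = b ∧ X e)).card : ℤ)
              = ⌈∑ e ∈ E.filter (fun e => e.2 = b), x e⌉)) ∧
      -- (P3) negative correlation
      (∀ c : Bool,
        (∀ (a : α) (S : Finset (α × β)), S ⊆ E.filter (fun e => e.1 = a) →
          ∑ X : (α × β) → Bool, μ X * (if ∀ e ∈ S, X e = c then 1 else 0)
            ≤ ∏ e ∈ S, ∑ X : (α × β) → Bool, μ X * (if X e = c then 1 else 0)) ∧
        (∀ (b : β) (S : Finset (α × β)), S ⊆ E.filter (fun e => e.2 = b) →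
          ∑ X : (α × β) → Bool, μ X * (if ∀ e ∈ S, X e = c then 1 else 0)
            ≤ ∏ e ∈ S, ∑ X : (α × β) → Bool, μ X * (if X e = c then 1 else 0))) := by
  obtain ⟨μ, h0, h1, hP1, hP2, hP3⟩ :=
    main E (E.filter (fun e => 0 < x e ∧ x e < 1)).card x hx01 (le_refl _)
  have hmarg : ∀ (c : Bool), ∀ e ∈ E,
      ∑ X : (α × β) → Bool, μ X * (if X e = c then 1 else 0)
        = (if c then x e else 1 - x e) := by
    intro c e he
    cases c
    · have hsplit : ∀ X : (α × β) → Bool,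
          (if X e = false then (1:ℝ) else 0) = 1 - (if X e then 1 else 0) := by
        intro X
        cases hXe : X e <;> simp [hXe]
      rw [Finset.sum_congr rfl (fun X _ => by rw [hsplit X, mul_sub, mul_one]),
        Finset.sum_sub_distrib, h1, hP1 e he]
      simp
    · have hsplit : ∀ X : (α × β) → Bool,
          (if X e = true then (1:ℝ) else 0) = (if X e then 1 else 0) := fun X => rfl
      rw [Finset.sum_congr rfl (fun X _ => by rw [hsplit X]), hP1 e he]
      simp
  refine ⟨μ, h0, h1, hP1, hP2, ?_⟩
  intro c
  constructor
  · intro a S hS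
    refine le_trans ((hP3 c).1 a S hS) (le_of_eq ?_)
    refine Finset.prod_congr rfl (fun e he => ?_)
    exact (hmarg c e (Finset.mem_filter.1 (hS he)).1).symm
  · intro b S hS
    refine le_trans ((hP3 c).2 b S hS) (le_of_eq ?_)
    refine Finset.prod_congr rfl (fun e he => ?_)
    exact (hmarg c e (Finset.mem_filter.1 (hS he)).1).symm
end

section
/- Let (U,V,E) be a finite bipartite graph containing no cycles (i.e., a forest), and let x : E → ℝ satisfy 0 < x_e < 1 for every e ∈ E. Then every connected component of the graph that contains at least one edge contains at least two floating vertices, i.e., at least two vertices a with x(a) not an integer. -/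
open Finset

/-- The fractional degree of a vertex of the bipartite graph with left
vertices `U`, right vertices `V` and edge set `E`, under `x`. -/
def fracDeg {U V : Type*} [DecidableEq U] [DecidableEq V]
    (E : Finset (U × V)) (x : U × V → ℝ) : U ⊕ V → ℝ
  | Sum.inl u => ∑ e ∈ E.filter (fun e => e.1 = u), x e
  | Sum.inr v => ∑ e ∈ E.filter (fun e => e.2 = v), x e

/-- A walk in `G` whose support lies in `s` gives reachability in `G.induce s`. -/
lemma reach_induce_aux {W : Type*} {G : SimpleGraph W} {s : Set W} :
    ∀ {u v : W} (w : G.Walk u v) (hs : ∀ p ∈ w.support, p ∈ s),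
    (G.induce s).Reachable ⟨u, hs u w.start_mem_support⟩ ⟨v, hs v w.end_mem_support⟩ := by
  intro u v w
  induction w with
  | nil => intro hs; exact SimpleGraph.Reachable.refl _
  | @cons a b c h q ih =>
    intro hs
    have hb : b ∈ s := hs b (by simp [SimpleGraph.Walk.support_cons])
    have ha : a ∈ s := hs a (by simp [SimpleGraph.Walk.support_cons])
    have hq : ∀ p ∈ q.support, p ∈ s := by
      intro p hp; exact hs p (by simp [SimpleGraph.Walk.support_cons, hp])
    have hadj : (G.induce s).Adj ⟨a, ha⟩ ⟨b, hb⟩ := by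
      simpa using h
    exact hadj.reachable.trans (ih hq)

/-- In a finite bipartite forest (no cycles) whose edge values
all lie strictly between 0 and 1, every connected component containing at
least one edge contains at least two floating vertices (vertices whose
fractional degree is not an integer). -/
theorem stmt3 {U V : Type*} [Fintype U] [Fintype V] [DecidableEq U] [DecidableEq V]
    (E : Finset (U × V)) (x : U × V → ℝ)
    (hx : ∀ e ∈ E, 0 < x e ∧ x e < 1)
    (G : SimpleGraph (U ⊕ V))
    (hG : G = SimpleGraph.fromRel
      (fun p q => ∃ e ∈ E, p = Sum.inl e.1 ∧ q = Sum.inr e.2))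
    (hforest : G.IsAcyclic) :
    ∀ e ∈ E, ∃ p q : U ⊕ V, p ≠ q ∧
      G.Reachable (Sum.inl e.1) p ∧ G.Reachable (Sum.inl e.1) q ∧
      (¬ ∃ z : ℤ, fracDeg E x p = (z : ℝ)) ∧
      (¬ ∃ z : ℤ, fracDeg E x q = (z : ℝ)) := by
  classical
  intro e he
  set r : U ⊕ V := Sum.inl e.1 with hr
  set K : G.ConnectedComponent := G.connectedComponentMk r with hK
  set S : Set (U ⊕ V) := K.supp with hS
  -- basic adjacency facts
  have hAdj : ∀ e' ∈ E, G.Adj (Sum.inl e'.1) (Sum.inr e'.2) := by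
    intro e' he'
    rw [hG, SimpleGraph.fromRel_adj]
    exact ⟨by simp, Or.inl ⟨e', he', rfl, rfl⟩⟩
  have hadj_ex : ∀ p q : U ⊕ V, G.Adj p q → ∃ e' ∈ E,
      (p = Sum.inl e'.1 ∧ q = Sum.inr e'.2) ∨ (q = Sum.inl e'.1 ∧ p = Sum.inr e'.2) := by
    intro p q hpq
    rw [hG, SimpleGraph.fromRel_adj] at hpq
    rcases hpq.2 with ⟨e', he', h1, h2⟩ | ⟨e', he', h1, h2⟩
    · exact ⟨e', he', Or.inl ⟨h1, h2⟩⟩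
    · exact ⟨e', he', Or.inr ⟨h1, h2⟩⟩
  have hreach_of_mem : ∀ p ∈ S, G.Reachable r p := by
    intro p hp
    rw [hS, SimpleGraph.ConnectedComponent.mem_supp_iff] at hp
    have hp' : G.connectedComponentMk p = G.connectedComponentMk r := hp
    exact (SimpleGraph.ConnectedComponent.exact hp').symm
  have hmem_of_reach : ∀ p, G.Reachable r p → p ∈ S := by
    intro p hp
    rw [hS, SimpleGraph.ConnectedComponent.mem_supp_iff, hK]
    exact SimpleGraph.ConnectedComponent.sound hp.symm
  have hrS : r ∈ S := hmem_of_reach r (SimpleGraph.Reachable.refl r)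
  have hSboth : ∀ e' ∈ E, (Sum.inl e'.1 ∈ S ↔ Sum.inr e'.2 ∈ S) := by
    intro e' he'
    constructor
    · intro h; exact hmem_of_reach _ ((hreach_of_mem _ h).trans (hAdj e' he').reachable)
    · intro h; exact hmem_of_reach _ ((hreach_of_mem _ h).trans (hAdj e' he').symm.reachable)
  -- each vertex of S is incident with an edge
  have hS_inc : ∀ p ∈ S, ∃ e' ∈ E, p = Sum.inl e'.1 ∨ p = Sum.inr e'.2 := by
    intro p hp
    by_cases hpr : p = r
    · exact ⟨e, he, Or.inl (by rw [hpr])⟩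
    · obtain ⟨w⟩ := (hreach_of_mem p hp).symm
      cases w with
      | nil => exact absurd rfl hpr
      | cons h q =>
        obtain ⟨e', he', hc⟩ := hadj_ex _ _ h
        rcases hc with ⟨h1, _⟩ | ⟨_, h2⟩
        · exact ⟨e', he', Or.inl h1⟩
        · exact ⟨e', he', Or.inr h2⟩
  -- degrees and vertex sets
  set dU : U → ℕ := fun u => (E.filter fun e' => e'.1 = u).card with hdU
  set dV : V → ℕ := fun v => (E.filter fun e' => e'.2 = v).card with hdV
  set CU : Finset U := univ.filter (fun u => Sum.inl u ∈ S) with hCU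
  set CV : Finset V := univ.filter (fun v => Sum.inr v ∈ S) with hCV
  set FU : Finset U := CU.filter (fun u => ¬∃ z : ℤ, fracDeg E x (Sum.inl u) = (z : ℝ)) with hFU
  set FV : Finset V := CV.filter (fun v => ¬∃ z : ℤ, fracDeg E x (Sum.inr v) = (z : ℝ)) with hFV
  -- degree lower bounds
  have hd1U : ∀ u ∈ CU, 1 ≤ dU u := by
    intro u hu
    rw [hCU, mem_filter] at hu
    obtain ⟨e', he', hc⟩ := hS_inc _ hu.2
    rcases hc with h1 | h1
    · refine Finset.card_pos.mpr ⟨e', ?_⟩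
      rw [mem_filter]
      exact ⟨he', by injection h1.symm⟩
    · exact absurd h1 (by simp)
  have hd1V : ∀ v ∈ CV, 1 ≤ dV v := by
    intro v hv
    rw [hCV, mem_filter] at hv
    obtain ⟨e', he', hc⟩ := hS_inc _ hv.2
    rcases hc with h1 | h1
    · exact absurd h1 (by simp)
    · refine Finset.card_pos.mpr ⟨e', ?_⟩
      rw [mem_filter]
      exact ⟨he', by injection h1.symm⟩
  have hnotint : ∀ (s : Finset (U × V)), s ⊆ E → s.card = 1 →
      ¬∃ z : ℤ, (∑ e' ∈ s, x e') = (z : ℝ) := by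
    intro s hsE hs1 ⟨z, hz⟩
    obtain ⟨e', he'⟩ := Finset.card_eq_one.mp hs1
    rw [he', Finset.sum_singleton] at hz
    have hxe := hx e' (hsE (he' ▸ Finset.mem_singleton_self e'))
    rw [hz] at hxe
    have h1 : (0 : ℤ) < z := by exact_mod_cast hxe.1
    have h2 : z < 1 := by exact_mod_cast hxe.2
    omega
  have hd2U : ∀ u ∈ CU, u ∉ FU → 2 ≤ dU u := by
    intro u hu hnf
    rw [hFU, mem_filter, not_and, not_not] at hnf
    have hz := hnf hu
    by_contra hlt
    push_neg at hlt
    have h1 : dU u = 1 := le_antisymm (by omega) (hd1U u hu)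
    exact hnotint _ (Finset.filter_subset _ _) h1 (by simpa [fracDeg] using hz)
  have hd2V : ∀ v ∈ CV, v ∉ FV → 2 ≤ dV v := by
    intro v hv hnf
    rw [hFV, mem_filter, not_and, not_not] at hnf
    have hz := hnf hv
    by_contra hlt
    push_neg at hlt
    have h1 : dV v = 1 := le_antisymm (by omega) (hd1V v hv)
    exact hnotint _ (Finset.filter_subset _ _) h1 (by simpa [fracDeg] using hz)
  -- edge set of the component
  set E' : Finset (U × V) := E.filter (fun e' => Sum.inl e'.1 ∈ S) with hE'
  have hsumU : E'.card = ∑ u ∈ CU, dU u := by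
    rw [Finset.card_eq_sum_card_fiberwise (f := Prod.fst) (t := CU)
      (fun e' he' => by
        rw [hE', Finset.mem_coe, mem_filter] at he'
        rw [hCU, Finset.mem_coe, mem_filter]
        exact ⟨mem_univ _, he'.2⟩)]
    refine Finset.sum_congr rfl fun u hu => ?_
    rw [hCU, mem_filter] at hu
    congr 1
    ext e'
    simp only [hE', mem_filter, and_assoc]
    constructor
    · rintro ⟨h1, _, h3⟩; exact ⟨h1, h3⟩
    · rintro ⟨h1, h3⟩; exact ⟨h1, h3 ▸ hu.2, h3⟩
  have hsumV : E'.card = ∑ v ∈ CV, dV v := by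
    have hEE : E' = E.filter (fun e' => Sum.inr e'.2 ∈ S) := by
      rw [hE']
      refine Finset.filter_congr fun e' he' => ?_
      simp [hSboth e' he']
    rw [hEE]
    rw [Finset.card_eq_sum_card_fiberwise (f := Prod.snd) (t := CV)
      (fun e' he' => by
        rw [Finset.mem_coe, mem_filter] at he'
        rw [hCV, Finset.mem_coe, mem_filter]
        exact ⟨mem_univ _, he'.2⟩)]
    refine Finset.sum_congr rfl fun v hv => ?_
    rw [hCV, mem_filter] at hv
    congr 1
    ext e'
    simp only [mem_filter, and_assoc]
    constructor
    · rintro ⟨h1, _, h3⟩; exact ⟨h1, h3⟩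
    · rintro ⟨h1, h3⟩; exact ⟨h1, h3 ▸ hv.2, h3⟩
  -- the induced graph on S is a tree
  have hconn : (G.induce S).Connected := by
    have : Nonempty S := ⟨⟨r, hrS⟩⟩
    refine SimpleGraph.Connected.mk ?_
    rintro ⟨a, ha⟩ ⟨b, hb⟩
    obtain ⟨w⟩ := (hreach_of_mem a ha).symm.trans (hreach_of_mem b hb)
    have hsupp : ∀ p ∈ w.support, p ∈ S := by
      intro p hp
      have : G.Reachable a p := ⟨w.takeUntil p hp⟩
      exact hmem_of_reach p ((hreach_of_mem a ha).trans this)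
    exact reach_induce_aux w hsupp
  have hacyc : (G.induce S).IsAcyclic := by
    have emb : G.induce S ↪g G := SimpleGraph.Embedding.induce S
    intro v c hc
    exact hforest _ (hc.map emb.injective (f := emb.toHom))
  have hT : (G.induce S).IsTree := ⟨hconn, hacyc⟩
  have htc := hT.card_edgeFinset
  -- the number of edges of the induced graph is E'.card
  have hEcard : (G.induce S).edgeFinset.card = E'.card := by
    refine Eq.symm (Finset.card_bij
      (fun e' he' => Sym2.mk (⟨Sum.inl e'.1, (mem_filter.mp he').2⟩ : S)
        (⟨Sum.inr e'.2, (hSboth e' (mem_filter.mp he').1).mp (mem_filter.mp he').2⟩ : S))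
      ?_ ?_ ?_)
    · intro e' he'
      rw [SimpleGraph.mem_edgeFinset, SimpleGraph.mem_edgeSet]
      simpa using hAdj e' (mem_filter.mp he').1
    · intro a ha b hb hab
      rw [Sym2.eq_iff] at hab
      rcases hab with ⟨h1, h2⟩ | ⟨h1, h2⟩
      · have h1' := congrArg Subtype.val h1
        have h2' := congrArg Subtype.val h2
        simp only at h1' h2'
        exact Prod.ext (by injection h1') (by injection h2')
      · have h1' := congrArg Subtype.val h1
        simp only at h1'
        exact absurd h1' (by simp)
    · intro ed hed
      induction ed using Sym2.ind with
      | _ a b =>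
        rw [SimpleGraph.mem_edgeFinset, SimpleGraph.mem_edgeSet] at hed
        have hadj : G.Adj a.1 b.1 := by simpa using hed
        obtain ⟨e', he', hc⟩ := hadj_ex _ _ hadj
        rcases hc with ⟨h1, h2⟩ | ⟨h1, h2⟩
        · have hm : e' ∈ E' := by
            rw [hE', mem_filter]
            exact ⟨he', h1 ▸ a.2⟩
          exact ⟨e', hm, Sym2.eq_iff.mpr (Or.inl ⟨Subtype.ext h1.symm, Subtype.ext h2.symm⟩)⟩
        · have hm : e' ∈ E' := by
            rw [hE', mem_filter]
            exact ⟨he', h1 ▸ b.2⟩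
          exact ⟨e', hm, Sym2.eq_iff.mpr (Or.inr ⟨Subtype.ext h1.symm, Subtype.ext h2.symm⟩)⟩
  -- cardinality of S
  have hcardS : Fintype.card S = CU.card + CV.card := by
    rw [Fintype.card_congr (Equiv.subtypeSum (p := fun p => p ∈ S)), Fintype.card_sum,
      Fintype.card_subtype, Fintype.card_subtype]
  have hEcount : E'.card + 1 = CU.card + CV.card := by
    rw [← hcardS, ← htc, hEcard]
  -- counting floating vertices
  have hboundU : 2 * CU.card ≤ (∑ u ∈ CU, dU u) + FU.card := by
    have h1 : ∀ u ∈ CU, 2 ≤ dU u + (if u ∈ FU then 1 else 0) := by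
      intro u hu
      by_cases hf : u ∈ FU
      · simp only [hf, if_pos]
        have := hd1U u hu; omega
      · simp only [hf, if_neg, not_false_iff]
        have := hd2U u hu hf; omega
    calc 2 * CU.card = ∑ _u ∈ CU, 2 := by rw [Finset.sum_const, smul_eq_mul, mul_comm]
      _ ≤ ∑ u ∈ CU, (dU u + if u ∈ FU then 1 else 0) := Finset.sum_le_sum h1
      _ = (∑ u ∈ CU, dU u) + ∑ u ∈ CU, (if u ∈ FU then 1 else 0) := Finset.sum_add_distrib
      _ = (∑ u ∈ CU, dU u) + FU.card := by
          have hsub : FU ⊆ CU := hFU ▸ Finset.filter_subset _ _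
          rw [Finset.sum_boole, Finset.filter_mem_eq_inter, Finset.inter_eq_right.mpr hsub]
          simp
  have hboundV : 2 * CV.card ≤ (∑ v ∈ CV, dV v) + FV.card := by
    have h1 : ∀ v ∈ CV, 2 ≤ dV v + (if v ∈ FV then 1 else 0) := by
      intro v hv
      by_cases hf : v ∈ FV
      · simp only [hf, if_pos]
        have := hd1V v hv; omega
      · simp only [hf, if_neg, not_false_iff]
        have := hd2V v hv hf; omega
    calc 2 * CV.card = ∑ _v ∈ CV, 2 := by rw [Finset.sum_const, smul_eq_mul, mul_comm]
      _ ≤ ∑ v ∈ CV, (dV v + if v ∈ FV then 1 else 0) := Finset.sum_le_sum h1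
      _ = (∑ v ∈ CV, dV v) + ∑ v ∈ CV, (if v ∈ FV then 1 else 0) := Finset.sum_add_distrib
      _ = (∑ v ∈ CV, dV v) + FV.card := by
          have hsub : FV ⊆ CV := hFV ▸ Finset.filter_subset _ _
          rw [Finset.sum_boole, Finset.filter_mem_eq_inter, Finset.inter_eq_right.mpr hsub]
          simp
  have hmain : 2 ≤ FU.card + FV.card := by
    have h1 := hboundU
    have h2 := hboundV
    rw [← hsumU] at h1
    rw [← hsumV] at h2
    omega
  -- extract two floating vertices
  set F : Finset (U ⊕ V) := FU.image Sum.inl ∪ FV.image Sum.inr with hF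
  have hFcard : F.card = FU.card + FV.card := by
    rw [hF, Finset.card_union_of_disjoint, Finset.card_image_of_injective _ Sum.inl_injective,
      Finset.card_image_of_injective _ Sum.inr_injective]
    rw [Finset.disjoint_left]
    rintro p hp hq
    obtain ⟨u, _, rfl⟩ := Finset.mem_image.mp hp
    obtain ⟨v, _, hv⟩ := Finset.mem_image.mp hq
    exact absurd hv (by simp)
  have hFprop : ∀ p ∈ F, G.Reachable r p ∧ ¬∃ z : ℤ, fracDeg E x p = (z : ℝ) := by
    intro p hp
    rw [hF, Finset.mem_union] at hp
    rcases hp with hp | hp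
    · obtain ⟨u, hu, rfl⟩ := Finset.mem_image.mp hp
      rw [hFU, mem_filter] at hu
      have hu2 := hu.1
      rw [hCU, mem_filter] at hu2
      exact ⟨hreach_of_mem _ hu2.2, hu.2⟩
    · obtain ⟨v, hv, rfl⟩ := Finset.mem_image.mp hp
      rw [hFV, mem_filter] at hv
      have hv2 := hv.1
      rw [hCV, mem_filter] at hv2
      exact ⟨hreach_of_mem _ hv2.2, hv.2⟩
  have h2F : 1 < F.card := by omega
  obtain ⟨p, q, hp, hq, hpq⟩ := Finset.one_lt_card_iff.mp h2F
  exact ⟨p, q, hpq, (hFprop p hp).1, (hFprop q hq).1, (hFprop p hp).2, (hFprop q hq).2⟩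
end

section
/- Fix a BarterSV instance: a finite set of agents [n] = {1,…,n}, a finite set of items I with values v_j > 0 for j ∈ I, for each agent i a have-list H_i ⊆ I and a wishlist W_i ⊆ I, and utilities w(i,i',j) ∈ ℝ for all agents i,i' and items j. Construct the bipartite graph with left vertices L_i := {ℓ_{ij} : j ∈ H_i}, right vertices R_i := {r_{ij} : j ∈ W_i}, edge set E := {(ℓ_{ij}, r_{i'j}) : j ∈ H_i ∩ W_{i'}}, edge weight w_{(ℓ_{ij}, r_{i'j})} := w(i,i',j), and vertex values v_{ℓ_{ij}} := v_j and v_{r_{i'j}} := v_j. Then the maximum of Σ_{i,i',j} w(i,i',j)·g(i,i',j) over all balanced valid allocations g of the BarterSV instance equals the maximum of Σ_{e∈M} w_e over all value-balanced matchings M of the constructed graph. -/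
open Finset

section Aux
variable {n : ℕ} {ι : Type*} [Fintype ι] [DecidableEq ι]

/-- The matching associated to an allocation. -/
def barterM (g : Fin n → Fin n → ι → Bool) : Finset ((Fin n × ι) × (Fin n × ι)) :=
  univ.filter (fun p => p.1.2 = p.2.2 ∧ g p.1.1 p.2.1 p.1.2)

lemma mem_barterM {g : Fin n → Fin n → ι → Bool} {p : (Fin n × ι) × (Fin n × ι)} :
    p ∈ barterM g ↔ p.1.2 = p.2.2 ∧ g p.1.1 p.2.1 p.1.2 := by
  simp [barterM]

lemma barterM_card_left (g : Fin n → Fin n → ι → Bool) (i : Fin n) (j : ι) :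
    ((barterM g).filter (fun p => p.1 = (i, j))).card
      = (univ.filter (fun i' : Fin n => g i i' j)).card := by
  refine Finset.card_nbij' (fun p => p.2.1) (fun i' => ((i, j), (i', j))) ?_ ?_ ?_ ?_
  · rintro ⟨⟨a, b⟩, ⟨c, d⟩⟩ hp
    simp only [mem_coe, mem_filter, mem_barterM, Prod.mk.injEq] at hp
    obtain ⟨⟨hij, hg⟩, h1, h2⟩ := hp
    subst h1; subst h2; subst hij
    simpa using hg
  · intro i' hi'
    simp only [mem_coe, mem_filter, mem_univ, true_and] at hi'
    simp [mem_filter, mem_barterM, hi']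
  · rintro ⟨⟨a, b⟩, ⟨c, d⟩⟩ hp
    simp only [mem_coe, mem_filter, mem_barterM, Prod.mk.injEq] at hp
    obtain ⟨⟨hij, hg⟩, h1, h2⟩ := hp
    subst h1; subst h2; subst hij; rfl
  · intro i' _; rfl

lemma barterM_card_right (g : Fin n → Fin n → ι → Bool) (i : Fin n) (j : ι) :
    ((barterM g).filter (fun p => p.2 = (i, j))).card
      = (univ.filter (fun i' : Fin n => g i' i j)).card := by
  refine Finset.card_nbij' (fun p => p.1.1) (fun i' => ((i', j), (i, j))) ?_ ?_ ?_ ?_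
  · rintro ⟨⟨a, b⟩, ⟨c, d⟩⟩ hp
    simp only [mem_coe, mem_filter, mem_barterM, Prod.mk.injEq] at hp
    obtain ⟨⟨hij, hg⟩, h1, h2⟩ := hp
    subst h1; subst h2; subst hij
    simpa using hg
  · intro i' hi'
    simp only [mem_coe, mem_filter, mem_univ, true_and] at hi'
    simp [mem_filter, mem_barterM, hi']
  · rintro ⟨⟨a, b⟩, ⟨c, d⟩⟩ hp
    simp only [mem_coe, mem_filter, mem_barterM, Prod.mk.injEq] at hp
    obtain ⟨⟨hij, hg⟩, h1, h2⟩ := hp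
    subst h1; subst h2; subst hij; rfl
  · intro i' _; rfl

lemma barterM_sum_left (g : Fin n → Fin n → ι → Bool) (v : ι → ℝ) (i : Fin n) :
    (∑ p ∈ (barterM g).filter (fun p => p.1.1 = i), v p.1.2)
      = ∑ i' : Fin n, ∑ j : ι, (if g i i' j then v j else 0) := by
  rw [show (∑ i' : Fin n, ∑ j : ι, (if g i i' j then v j else 0))
      = ∑ t ∈ (univ : Finset (Fin n × ι)), (if g i t.1 t.2 then v t.2 else 0) by
    rw [Fintype.sum_prod_type]]
  rw [← Finset.sum_filter]
  refine Finset.sum_nbij' (fun p => (p.2.1, p.1.2)) (fun t => ((i, t.2), (t.1, t.2)))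
    ?_ ?_ ?_ ?_ ?_
  · rintro ⟨⟨a, b⟩, ⟨c, d⟩⟩ hp
    simp only [mem_filter, mem_barterM] at hp
    obtain ⟨⟨hij, hg⟩, h1⟩ := hp
    subst h1; subst hij
    simpa using hg
  · intro t ht
    simp only [mem_filter, mem_univ, true_and] at ht
    simp [mem_filter, mem_barterM, ht]
  · rintro ⟨⟨a, b⟩, ⟨c, d⟩⟩ hp
    simp only [mem_filter, mem_barterM] at hp
    obtain ⟨⟨hij, hg⟩, h1⟩ := hp
    subst h1; subst hij; rfl
  · intro t _; rfl
  · intro p _; rfl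

lemma barterM_sum_right (g : Fin n → Fin n → ι → Bool) (v : ι → ℝ) (i : Fin n) :
    (∑ p ∈ (barterM g).filter (fun p => p.2.1 = i), v p.2.2)
      = ∑ i' : Fin n, ∑ j : ι, (if g i' i j then v j else 0) := by
  rw [show (∑ i' : Fin n, ∑ j : ι, (if g i' i j then v j else 0))
      = ∑ t ∈ (univ : Finset (Fin n × ι)), (if g t.1 i t.2 then v t.2 else 0) by
    rw [Fintype.sum_prod_type]]
  rw [← Finset.sum_filter]
  refine Finset.sum_nbij' (fun p => (p.1.1, p.2.2)) (fun t => ((t.1, t.2), (i, t.2)))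
    ?_ ?_ ?_ ?_ ?_
  · rintro ⟨⟨a, b⟩, ⟨c, d⟩⟩ hp
    simp only [mem_filter, mem_barterM] at hp
    obtain ⟨⟨hij, hg⟩, h1⟩ := hp
    subst h1; subst hij
    simpa using hg
  · intro t ht
    simp only [mem_filter, mem_univ, true_and] at ht
    simp [mem_filter, mem_barterM, ht]
  · rintro ⟨⟨a, b⟩, ⟨c, d⟩⟩ hp
    simp only [mem_filter, mem_barterM] at hp
    obtain ⟨⟨hij, hg⟩, h1⟩ := hp
    subst h1; subst hij; rfl
  · intro t _; rfl
  · intro p _; rfl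

lemma barterM_sum_w (g : Fin n → Fin n → ι → Bool) (w : Fin n → Fin n → ι → ℝ) :
    (∑ p ∈ barterM g, w p.1.1 p.2.1 p.1.2)
      = ∑ i : Fin n, ∑ i' : Fin n, ∑ j : ι, (if g i i' j then w i i' j else 0) := by
  rw [show (∑ i : Fin n, ∑ i' : Fin n, ∑ j : ι, (if g i i' j then w i i' j else 0))
      = ∑ t ∈ (univ : Finset (Fin n × Fin n × ι)),
          (if g t.1 t.2.1 t.2.2 then w t.1 t.2.1 t.2.2 else 0) by
    rw [Fintype.sum_prod_type]
    exact Fintype.sum_congr _ _ (fun i => by rw [Fintype.sum_prod_type])]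
  rw [← Finset.sum_filter]
  refine Finset.sum_nbij' (fun p => (p.1.1, p.2.1, p.1.2))
    (fun t => ((t.1, t.2.2), (t.2.1, t.2.2))) ?_ ?_ ?_ ?_ ?_
  · rintro ⟨⟨a, b⟩, ⟨c, d⟩⟩ hp
    rw [mem_barterM] at hp
    simp only [mem_filter, mem_univ, true_and]
    exact hp.2
  · intro t ht
    simp only [mem_filter, mem_univ, true_and] at ht
    simp [mem_barterM, ht]
  · rintro ⟨⟨a, b⟩, ⟨c, d⟩⟩ hp
    rw [mem_barterM] at hp
    obtain ⟨hij, hg⟩ := hp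
    simp only at hij
    subst hij; rfl
  · intro t _; rfl
  · intro p _; rfl

end Aux

/-- Lemma: equivalence of BarterSV and value-balanced matching. -/
theorem stmt4 {n : ℕ} {ι : Type*} [Fintype ι] [DecidableEq ι]
    (v : ι → ℝ) (hv : ∀ j, 0 < v j)
    (H W : Fin n → Finset ι)
    (w : Fin n → Fin n → ι → ℝ) :
    sSup {u : ℝ | ∃ g : Fin n → Fin n → ι → Bool,
        -- valid allocation: each agent receives only wished-for items, at most once
        (∀ i : Fin n, ∀ j : ι,
          if j ∈ W i then (univ.filter (fun i' : Fin n => g i' i j)).card ≤ 1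
          else (univ.filter (fun i' : Fin n => g i' i j)).card = 0) ∧
        -- and gives away only owned items, at most once
        (∀ i : Fin n, ∀ j : ι,
          if j ∈ H i then (univ.filter (fun i' : Fin n => g i i' j)).card ≤ 1
          else (univ.filter (fun i' : Fin n => g i i' j)).card = 0) ∧
        -- balanced: each agent's given value equals its received value
        (∀ i : Fin n,
          (∑ i' : Fin n, ∑ j : ι, (if g i i' j then v j else 0))
            = ∑ i' : Fin n, ∑ j : ι, (if g i' i j then v j else 0)) ∧
        -- u is the total utility of the allocation
        (∑ i : Fin n, ∑ i' : Fin n, ∑ j : ι, (if g i i' j then w i i' j else 0)) = u}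
      = sSup {u : ℝ | ∃ M : Finset ((Fin n × ι) × (Fin n × ι)),
          -- edges of the constructed graph: same item, owned by the giver,
          -- wished for by the receiver
          (∀ p ∈ M, p.1.2 = p.2.2 ∧ p.1.2 ∈ H p.1.1 ∧ p.2.2 ∈ W p.2.1) ∧
          -- matching: every left / right vertex is matched at most once
          (∀ a : Fin n × ι, (M.filter (fun p => p.1 = a)).card ≤ 1) ∧
          (∀ a : Fin n × ι, (M.filter (fun p => p.2 = a)).card ≤ 1) ∧
          -- value-balanced: matched value in L_i equals matched value in R_i
          (∀ i : Fin n,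
            (∑ p ∈ M.filter (fun p => p.1.1 = i), v p.1.2)
              = ∑ p ∈ M.filter (fun p => p.2.1 = i), v p.2.2) ∧
          -- u is the total weight of the matching
          (∑ p ∈ M, w p.1.1 p.2.1 p.1.2) = u} := by
  congr 1
  ext u
  simp only [Set.mem_setOf_eq]
  constructor
  · rintro ⟨g, hrec, hgive, hbal, hsum⟩
    have hH : ∀ i i' j, g i i' j → j ∈ H i := by
      intro i i' j hg
      by_contra hj
      have h0 := hgive i j
      rw [if_neg hj, Finset.card_eq_zero, Finset.filter_eq_empty_iff] at h0
      exact h0 (Finset.mem_univ i') (by simp [hg])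
    have hW : ∀ i i' j, g i i' j → j ∈ W i' := by
      intro i i' j hg
      by_contra hj
      have h0 := hrec i' j
      rw [if_neg hj, Finset.card_eq_zero, Finset.filter_eq_empty_iff] at h0
      exact h0 (Finset.mem_univ i) (by simp [hg])
    refine ⟨barterM g, ?_, ?_, ?_, ?_, ?_⟩
    · rintro ⟨⟨a, b⟩, ⟨c, d⟩⟩ hp
      rw [mem_barterM] at hp
      obtain ⟨hij, hg⟩ := hp
      simp only at hij hg
      subst hij
      exact ⟨rfl, hH a c b hg, hW a c b hg⟩
    · rintro ⟨i, j⟩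
      rw [barterM_card_left]
      have h := hgive i j
      split at h <;> omega
    · rintro ⟨i, j⟩
      rw [barterM_card_right]
      have h := hrec i j
      split at h <;> omega
    · intro i
      rw [barterM_sum_left, barterM_sum_right]
      exact hbal i
    · rw [barterM_sum_w]
      exact hsum
  · rintro ⟨M, hedge, hL, hR, hbal, hsum⟩
    set g : Fin n → Fin n → ι → Bool := fun i i' j => decide (((i, j), (i', j)) ∈ M)
      with hgdef
    have hMg : M = barterM g := by
      ext ⟨⟨a, b⟩, ⟨c, d⟩⟩
      rw [mem_barterM]
      simp only [hgdef, decide_eq_true_eq]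
      constructor
      · intro hp
        have hbd := (hedge _ hp).1
        simp only at hbd
        subst hbd
        exact ⟨rfl, hp⟩
      · rintro ⟨hbd, hp⟩
        subst hbd
        exact hp
    refine ⟨g, ?_, ?_, ?_, ?_⟩
    · intro i j
      have hc : (univ.filter (fun i' : Fin n => g i' i j)).card
          = (M.filter (fun p => p.2 = (i, j))).card := by
        rw [hMg, barterM_card_right]
      by_cases hj : j ∈ W i
      · rw [if_pos hj, hc]
        exact hR (i, j)
      · rw [if_neg hj, Finset.card_eq_zero, Finset.filter_eq_empty_iff]
        intro i' _
        simp only [hgdef, decide_eq_true_eq]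
        intro hp
        exact hj ((hedge _ hp).2.2)
    · intro i j
      have hc : (univ.filter (fun i' : Fin n => g i i' j)).card
          = (M.filter (fun p => p.1 = (i, j))).card := by
        rw [hMg, barterM_card_left]
      by_cases hj : j ∈ H i
      · rw [if_pos hj, hc]
        exact hL (i, j)
      · rw [if_neg hj, Finset.card_eq_zero, Finset.filter_eq_empty_iff]
        intro i' _
        simp only [hgdef, decide_eq_true_eq]
        intro hp
        exact hj ((hedge _ hp).2.1)
    · intro i
      rw [← barterM_sum_left g v i, ← barterM_sum_right g v i, ← hMg]
      exact hbal i
    · rw [← barterM_sum_w, ← hMg]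
      exact hsum
end

section
/- Let a_1, …, a_n be positive integers with Σ_{j=1}^n a_j = 2T for a positive integer T. Consider the two-agent barter instance in which agent 1 owns items 1,…,n with values a_1,…,a_n and wishes only item n+1 of value T, while agent 2 owns item n+1 and wishes items 1,…,n. An allocation in this instance is a pair (J, b) where J ⊆ {1,…,n} is the set of items agent 1 gives to agent 2 and b ∈ {0,1} indicates whether agent 2 gives item n+1 to agent 1; it is nonempty if J ≠ ∅ or b = 1, and both agents' given value equals their received value exactly when Σ_{j∈J} a_j = b·T. Then there exists a nonempty allocation (J, b) with Σ_{j∈J} a_j = b·T if and only if there exists S₁ ⊆ {1,…,n} with Σ_{j∈S₁} a_j = T. -/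
open Finset

/-- Correctness of the reduction from Partition to BarterSV.
Given positive integers a_1,…,a_n summing to 2T, the two-agent barter instance
(agent 1 owns items 1..n valued a_j and wants item n+1 of value T; agent 2 owns
item n+1 and wants items 1..n) has a nonempty balanced allocation (J, b) with
Σ_{j∈J} a_j = b·T iff some subset of the a_j sums to T. -/
theorem stmt5 (n T : ℕ) (hT : 0 < T) (a : Fin n → ℕ) (ha : ∀ j, 0 < a j)
    (hsum : ∑ j, a j = 2 * T) :
    (∃ (J : Finset (Fin n)) (b : Bool), (J.Nonempty ∨ b = true) ∧
        ∑ j ∈ J, a j = (if b then T else 0)) ↔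
      ∃ S₁ : Finset (Fin n), ∑ j ∈ S₁, a j = T := by
  constructor
  · rintro ⟨J, b, hne, hbal⟩
    cases b with
    | true => exact ⟨J, by simpa using hbal⟩
    | false =>
      rcases hne with hJ | h
      · exfalso
        obtain ⟨j, hj⟩ := hJ
        have : 0 < ∑ k ∈ J, a k := Finset.sum_pos (fun k _ => ha k) ⟨j, hj⟩
        simp only [Bool.false_eq_true, if_false] at hbal
        exact absurd hbal this.ne'
      · simp at h
  · rintro ⟨S₁, hS⟩
    exact ⟨S₁, true, Or.inr rfl, by simpa using hS⟩
end

section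
/- Let n ≥ 2 be an integer and consider the feasible region P = {(x₁, x₂) ∈ [0,1]² : x₁ = x₂/n} with objective φ(x₁,x₂) = x₁ + x₂/n. Then (i) the maximum of φ over P equals 2/n and is attained at (1/n, 1), and (ii) the only point of P with both coordinates in {0,1} is (0,0), so every integral feasible point has objective value 0. -/
/-- The feasible region of the instance family Π(n): two agents, items of
value 1 and 1/n, balance constraint x₁ = x₂/n, box constraints [0,1]². -/
def piFeasible (n : ℕ) : Set (ℝ × ℝ) :=
  {p : ℝ × ℝ | 0 ≤ p.1 ∧ p.1 ≤ 1 ∧ 0 ≤ p.2 ∧ p.2 ≤ 1 ∧ p.1 = p.2 / n}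

/-- For the family Π(n) (n ≥ 2): (i) the maximum of the
objective x₁ + x₂/n over the feasible region equals 2/n and is attained at
(1/n, 1); (ii) the only feasible point with both coordinates in {0,1} is
(0,0), whose objective value is 0. -/
theorem stmt11 (n : ℕ) (hn : 2 ≤ n) :
    (((1 / (n : ℝ), (1 : ℝ)) ∈ piFeasible n) ∧
      (1 / (n : ℝ) + 1 / (n : ℝ) = 2 / (n : ℝ)) ∧
      IsGreatest ((fun p : ℝ × ℝ => p.1 + p.2 / n) '' piFeasible n) (2 / (n : ℝ))) ∧
    (∀ p ∈ piFeasible n, (p.1 = 0 ∨ p.1 = 1) → (p.2 = 0 ∨ p.2 = 1) →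
      p = ((0 : ℝ), (0 : ℝ)) ∧ p.1 + p.2 / n = 0) := by
  have hn1 : (1 : ℝ) < (n : ℝ) := by exact_mod_cast Nat.lt_of_lt_of_le one_lt_two hn
  have hn0 : (0 : ℝ) < (n : ℝ) := lt_trans one_pos hn1
  have hmem : (1 / (n : ℝ), (1 : ℝ)) ∈ piFeasible n := by
    refine ⟨by positivity, ?_, zero_le_one, le_refl 1, by simp⟩
    rw [div_le_one hn0]; linarith
  refine ⟨⟨hmem, by ring, ⟨⟨(1 / (n : ℝ), 1), hmem, by simp; ring⟩, ?_⟩⟩, ?_⟩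
  · rintro y ⟨p, ⟨_, _, _, h2, heq⟩, rfl⟩
    simp only
    rw [heq]
    have : p.2 / n ≤ 1 / n := by gcongr
    have h22 : (2:ℝ) / n = 1 / n + 1 / n := by ring
    linarith
  · rintro p ⟨h0, _, h2, _, heq⟩ h1 hp2
    have hp2' : p.2 = 0 := by
      rcases hp2 with h | h
      · exact h
      · exfalso
        rcases h1 with h' | h'
        · rw [h', h] at heq; simp at heq; linarith
        · rw [h', h] at heq
          rw [eq_comm, div_eq_one_iff_eq (ne_of_gt hn0)] at heq
          linarith
    have hp1' : p.1 = 0 := by rw [heq, hp2']; simp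
    exact ⟨Prod.ext hp1' hp2', by rw [hp1', hp2']; simp⟩
end

section
/- Let G=(L,R,E) be a finite bipartite graph with partitions L = L_1 ⊔ … ⊔ L_n and R = R_1 ⊔ … ⊔ R_n, and let w : E → ℝ. Consider the polytope P = {x ∈ [0,1]^E : x(a) ≤ 1 for every vertex a, and Σ_{a∈L_i} x(a) = Σ_{b∈R_i} x(b) for every i ∈ {1,…,n}}. Then the maximum of Σ_{e∈E} w_e·x_e over P is attained at a point x* ∈ P with x*_e ∈ {0,1} for every e ∈ E. -/
open Finset

set_option linter.unusedSectionVars false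
set_option maxHeartbeats 1000000

/-- Feasibility for the BarterSV LP with all item values equal (to 1):
`x ∈ [0,1]^E`, fractional degree at most 1 at every vertex (matching
constraints), and equal total fractional degree on each agent's left and
right vertices (barter-balance constraints). -/
def lpFeasible {α β : Type*} [Fintype α] [Fintype β] [DecidableEq α] [DecidableEq β]
    {n : ℕ} (pL : α → Fin n) (pR : β → Fin n)
    (E : Finset (α × β)) (x : α × β → ℝ) : Prop :=
  (∀ e ∈ E, 0 ≤ x e ∧ x e ≤ 1) ∧
  (∀ a : α, ∑ e ∈ E.filter (fun e => e.1 = a), x e ≤ 1) ∧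
  (∀ b : β, ∑ e ∈ E.filter (fun e => e.2 = b), x e ≤ 1) ∧
  (∀ i : Fin n,
    ∑ a ∈ univ.filter (fun a => pL a = i), ∑ e ∈ E.filter (fun e => e.1 = a), x e
      = ∑ b ∈ univ.filter (fun b => pR b = i), ∑ e ∈ E.filter (fun e => e.2 = b), x e)

set_option linter.unusedSectionVars false
set_option maxHeartbeats 1000000



def IsIntR (r : ℝ) : Prop := ∃ k : ℤ, r = k

lemma IsIntR.zero : IsIntR 0 := ⟨0, by norm_num⟩
lemma IsIntR.one : IsIntR 1 := ⟨1, by norm_num⟩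

lemma IsIntR.sub {r s : ℝ} (hr : IsIntR r) (hs : IsIntR s) : IsIntR (r - s) := by
  obtain ⟨k, rfl⟩ := hr; obtain ⟨m, rfl⟩ := hs; exact ⟨k - m, by push_cast; ring⟩

lemma IsIntR.sum {ι : Type*} (s : Finset ι) (f : ι → ℝ)
    (h : ∀ i ∈ s, IsIntR (f i)) : IsIntR (∑ i ∈ s, f i) := by
  classical
  induction s using Finset.induction_on with
  | empty => exact ⟨0, by norm_num⟩
  | @insert a t hx ih =>
    rw [Finset.sum_insert hx]
    obtain ⟨k, hk⟩ := h a (mem_insert_self a t)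
    obtain ⟨m, hm⟩ := ih (fun i hi => h i (mem_insert_of_mem hi))
    exact ⟨k + m, by rw [hk, hm]; push_cast; ring⟩

lemma not_isIntR {r : ℝ} (h0 : 0 < r) (h1 : r < 1) : ¬ IsIntR r := by
  rintro ⟨k, rfl⟩
  have hk0 : 0 < k := by exact_mod_cast h0
  have hk1 : k < 1 := by exact_mod_cast h1
  omega

lemma not_isIntR_sum {ι : Type*} [DecidableEq ι] (s : Finset ι) (f : ι → ℝ) (i0 : ι)
    (hi0 : i0 ∈ s) (h1 : ¬ IsIntR (f i0)) (h2 : ∀ i ∈ s, i ≠ i0 → IsIntR (f i)) :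
    ¬ IsIntR (∑ i ∈ s, f i) := by
  intro hs
  rw [← Finset.add_sum_erase s f hi0] at hs
  have hrest : IsIntR (∑ i ∈ s.erase i0, f i) :=
    IsIntR.sum _ _ (fun i hi => h2 i (mem_of_mem_erase hi) (ne_of_mem_erase hi))
  have : IsIntR (f i0) := by
    have := hs.sub hrest
    simpa using this
  exact h1 this

noncomputable def capf (v u : ℝ) : ℝ := if 0 < u then (1 - v) / u else v / (-u)

lemma capf_nonneg {v u : ℝ} (h0 : 0 ≤ v) (h1 : v ≤ 1) : 0 ≤ capf v u := by
  unfold capf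
  split_ifs with h
  · apply div_nonneg (by linarith) h.le
  · rcases eq_or_lt_of_le (not_lt.1 h) with h' | h'
    · subst h'; simp
    · apply div_nonneg h0 (by linarith)

lemma capf_bound {v u t : ℝ} (hu : u ≠ 0) (h0 : 0 ≤ v) (h1 : v ≤ 1)
    (ht0 : 0 ≤ t) (ht : t ≤ capf v u) : 0 ≤ v + t * u ∧ v + t * u ≤ 1 := by
  unfold capf at ht
  split_ifs at ht with h
  · have htu : t * u ≤ (1 - v) := by
      have := mul_le_mul_of_nonneg_right ht (le_of_lt h)
      rwa [div_mul_cancel₀ _ (ne_of_gt h)] at this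
    constructor
    · nlinarith
    · linarith
  · have hneg : u < 0 := lt_of_le_of_ne (not_lt.1 h) hu
    have htu : -v ≤ t * u := by
      have := mul_le_mul_of_nonneg_right ht (by linarith : (0:ℝ) ≤ -u)
      rw [div_mul_cancel₀ _ (by linarith : -u ≠ 0)] at this
      nlinarith
    constructor
    · linarith
    · nlinarith

lemma capf_hit {v u : ℝ} (hu : u ≠ 0) : v + capf v u * u = 0 ∨ v + capf v u * u = 1 := by
  unfold capf
  split_ifs with h
  · right; rw [div_mul_cancel₀ _ (ne_of_gt h)]; ring
  · left
    have hneg : u < 0 := lt_of_le_of_ne (not_lt.1 h) hu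
    have hv : v / -u * u = -v := by rw [div_mul_eq_mul_div, div_neg, mul_div_assoc, div_self hu]; ring
    linarith



lemma exists_dep {V ι : Type*} [Fintype V] [Fintype ι] [DecidableEq V] [DecidableEq ι]
    (A : Finset ι) (inc : ι → V → ℝ)
    (hsum : ∀ i ∈ A, ∑ v, inc i v = 0)
    (hsupp : ∀ i ∈ A, (univ.filter (fun v => inc i v ≠ 0)).card = 2)
    (hdeg : ∀ v, (A.filter (fun i => inc i v ≠ 0)).card ≠ 1) (hA : A.Nonempty) :
    ∃ d : ι → ℝ, (∀ i, i ∉ A → d i = 0) ∧ (∃ i ∈ A, d i ≠ 0) ∧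
      ∀ v, ∑ i, d i * inc i v = 0 := by
  classical
  by_cases hli : LinearIndependent ℝ (fun i : ↥A => inc i.1)
  · exfalso
    set Vp : Finset V := univ.filter (fun v => ∃ i ∈ A, inc i v ≠ 0) with hVp
    have hvanish : ∀ i ∈ A, ∀ v, v ∉ Vp → inc i v = 0 := by
      intro i hi v hv
      by_contra h
      exact hv (by simp only [hVp, mem_filter, mem_univ, true_and]; exact ⟨i, hi, h⟩)
    obtain ⟨i0, hi0⟩ := hA
    have h2 : (univ.filter (fun v => inc i0 v ≠ 0)).card = 2 := hsupp i0 hi0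
    have hVpne : Vp.Nonempty := by
      have hne : (univ.filter (fun v => inc i0 v ≠ 0)).Nonempty := by
        rw [← card_pos, h2]; norm_num
      obtain ⟨v, hv⟩ := hne
      simp only [mem_filter, mem_univ, true_and] at hv
      exact ⟨v, by simp only [hVp, mem_filter, mem_univ, true_and]; exact ⟨i0, hi0, hv⟩⟩
    have hhand : Vp.card ≤ A.card := by
      have key : ∑ i ∈ A, (univ.filter (fun v => inc i v ≠ 0)).card
          = ∑ v, (A.filter (fun i => inc i v ≠ 0)).card := by
        simp only [card_filter]
        exact Finset.sum_comm
      have lhs : ∑ i ∈ A, (univ.filter (fun v => inc i v ≠ 0)).card = 2 * A.card := by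
        rw [Finset.sum_congr rfl hsupp]; simp [mul_comm]
      have rhs : 2 * Vp.card ≤ ∑ v, (A.filter (fun i => inc i v ≠ 0)).card := by
        rw [← Finset.sum_filter_add_sum_filter_not univ (fun v => v ∈ Vp)]
        have h1 : 2 * Vp.card ≤ ∑ v ∈ univ.filter (fun v => v ∈ Vp),
            (A.filter (fun i => inc i v ≠ 0)).card := by
          have hbd : ∀ v ∈ univ.filter (fun v => v ∈ Vp),
              2 ≤ (A.filter (fun i => inc i v ≠ 0)).card := by
            intro v hv
            simp only [mem_filter, mem_univ, true_and] at hv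
            have hne : (A.filter (fun i => inc i v ≠ 0)).Nonempty := by
              simp only [hVp, mem_filter, mem_univ, true_and] at hv
              obtain ⟨i, hi, hiv⟩ := hv
              exact ⟨i, mem_filter.2 ⟨hi, hiv⟩⟩
            have h1' := hdeg v
            have hpos := card_pos.2 hne
            omega
          calc 2 * Vp.card = ∑ _v ∈ univ.filter (fun v => v ∈ Vp), 2 := by
                simp [Finset.filter_mem_eq_inter, mul_comm]
            _ ≤ _ := Finset.sum_le_sum hbd
        have h2' : 0 ≤ ∑ v ∈ univ.filter (fun v => ¬ v ∈ Vp),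
            (A.filter (fun i => inc i v ≠ 0)).card := Nat.zero_le _
        omega
      omega
    -- rank bound
    let σ : ({v : V // v ∈ Vp} → ℝ) →ₗ[ℝ] ℝ :=
      { toFun := fun f => ∑ v, f v
        map_add' := by intro f g; simp [Finset.sum_add_distrib]
        map_smul' := by intro c f; simp [Finset.mul_sum] }
    have hmem : ∀ i : ↥A, (fun v : {v : V // v ∈ Vp} => inc i.1 v.1) ∈ LinearMap.ker σ := by
      intro i
      simp only [LinearMap.mem_ker]
      show ∑ v : {v : V // v ∈ Vp}, inc i.1 v.1 = 0
      rw [Finset.sum_coe_sort Vp (fun v => inc i.1 v)]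
      rw [← hsum i.1 i.2]
      exact Finset.sum_subset (Finset.subset_univ Vp)
        (fun v _ hv => hvanish i.1 i.2 v hv)
    have hres : LinearIndependent ℝ (fun i : ↥A => fun v : {v : V // v ∈ Vp} => inc i.1 v.1) := by
      rw [Fintype.linearIndependent_iff]
      intro c hc
      apply Fintype.linearIndependent_iff.1 hli c
      funext u
      by_cases hu : u ∈ Vp
      · have := congrFun hc ⟨u, hu⟩
        simpa using this
      · simp only [Finset.sum_apply, Pi.smul_apply, smul_eq_mul, Pi.zero_apply]
        exact Finset.sum_eq_zero fun i _ => by rw [hvanish i.1 i.2 u hu, mul_zero]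
    let gfam : ↥A → LinearMap.ker σ := fun i => ⟨fun v => inc i.1 v.1, hmem i⟩
    have hg : LinearIndependent ℝ gfam :=
      LinearIndependent.of_comp (LinearMap.ker σ).subtype hres
    have hcard : Fintype.card ↥A ≤ Module.finrank ℝ (LinearMap.ker σ) :=
      hg.fintype_card_le_finrank
    have hsurj : Function.Surjective σ := by
      intro r
      obtain ⟨v0, hv0⟩ := hVpne
      refine ⟨fun v => if v = ⟨v0, hv0⟩ then r else 0, ?_⟩
      show (∑ v, if v = (⟨v0, hv0⟩ : {v : V // v ∈ Vp}) then r else 0) = r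
      simp [Finset.sum_ite_eq']
    have hrange : LinearMap.range σ = ⊤ := LinearMap.range_eq_top.2 hsurj
    have hrn := LinearMap.finrank_range_add_finrank_ker σ
    rw [hrange, finrank_top] at hrn
    have hdim : Module.finrank ℝ ({v : V // v ∈ Vp} → ℝ) = Vp.card := by
      rw [Module.finrank_pi]
      exact Fintype.card_coe Vp
    rw [hdim, Module.finrank_self] at hrn
    rw [Fintype.card_coe] at hcard
    have hVp1 : 1 ≤ Vp.card := card_pos.2 hVpne
    omega
  · obtain ⟨g, hg0, i0, hgi0⟩ := Fintype.not_linearIndependent_iff.1 hli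
    refine ⟨fun i => if h : i ∈ A then g ⟨i, h⟩ else 0, by intro i hi; simp [hi],
      ⟨i0.1, i0.2, by simpa using hgi0⟩, ?_⟩
    intro v
    have h0 : ∑ x : ↥A, g x * inc x.1 v = 0 := by
      have := congrFun hg0 v
      simpa [Finset.sum_apply] using this
    have e1 : ∑ i : ι, (if h : i ∈ A then g ⟨i, h⟩ else 0) * inc i v
        = ∑ i ∈ A, (if h : i ∈ A then g ⟨i, h⟩ else 0) * inc i v :=
      (Finset.sum_subset (Finset.subset_univ A)
        (fun i _ hi => by simp [hi])).symm
    rw [e1, ← Finset.sum_attach A (fun i => (if h : i ∈ A then g ⟨i, h⟩ else 0) * inc i v)]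
    rw [← h0]
    exact Finset.sum_congr rfl fun i _ => by rw [dif_pos i.2]



section Defs
variable {α β : Type*} [Fintype α] [Fintype β] [DecidableEq α] [DecidableEq β]

def degA (E : Finset (α × β)) (x : α × β → ℝ) (a : α) : ℝ :=
  ∑ e ∈ E.filter (fun e => e.1 = a), x e

def degB (E : Finset (α × β)) (x : α × β → ℝ) (b : β) : ℝ :=
  ∑ e ∈ E.filter (fun e => e.2 = b), x e

noncomputable def fracE (E : Finset (α × β)) (x : α × β → ℝ) : Finset (α × β) :=
  @Finset.filter _ (fun e => ¬(x e = 0 ∨ x e = 1)) (Classical.decPred _) E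

noncomputable def fracA (E : Finset (α × β)) (x : α × β → ℝ) : Finset α :=
  @Finset.filter _ (fun a => ¬ IsIntR (degA E x a)) (Classical.decPred _) univ

noncomputable def fracB (E : Finset (α × β)) (x : α × β → ℝ) : Finset β :=
  @Finset.filter _ (fun b => ¬ IsIntR (degB E x b)) (Classical.decPred _) univ

noncomputable def mmu (E : Finset (α × β)) (x : α × β → ℝ) : ℕ :=
  (fracE E x).card + (fracA E x).card + (fracB E x).card

lemma mem_fracE {E : Finset (α × β)} {x : α × β → ℝ} {e : α × β} :
    e ∈ fracE E x ↔ e ∈ E ∧ ¬(x e = 0 ∨ x e = 1) := by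
  unfold fracE; exact @Finset.mem_filter _ _ (Classical.decPred _) E e

lemma mem_fracA {E : Finset (α × β)} {x : α × β → ℝ} {a : α} :
    a ∈ fracA E x ↔ ¬ IsIntR (degA E x a) := by
  unfold fracA; simp [Finset.mem_filter]

lemma mem_fracB {E : Finset (α × β)} {x : α × β → ℝ} {b : β} :
    b ∈ fracB E x ↔ ¬ IsIntR (degB E x b) := by
  unfold fracB; simp [Finset.mem_filter]

variable {n : ℕ}

def incM (pL : α → Fin n) (pR : β → Fin n) :
    (α × β) ⊕ α ⊕ β → α ⊕ β ⊕ Fin n → ℝ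
  | Sum.inl e, Sum.inl a => if e.1 = a then 1 else 0
  | Sum.inl e, Sum.inr (Sum.inl b) => if e.2 = b then -1 else 0
  | Sum.inl _, Sum.inr (Sum.inr _) => 0
  | Sum.inr (Sum.inl a'), Sum.inl a => if a' = a then -1 else 0
  | Sum.inr (Sum.inl _), Sum.inr (Sum.inl _) => 0
  | Sum.inr (Sum.inl a'), Sum.inr (Sum.inr i) => if pL a' = i then 1 else 0
  | Sum.inr (Sum.inr _), Sum.inl _ => 0
  | Sum.inr (Sum.inr b'), Sum.inr (Sum.inl b) => if b' = b then 1 else 0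
  | Sum.inr (Sum.inr b'), Sum.inr (Sum.inr i) => if pR b' = i then -1 else 0

lemma incM_sum (pL : α → Fin n) (pR : β → Fin n) (i : (α × β) ⊕ α ⊕ β) :
    ∑ v, incM pL pR i v = 0 := by
  rcases i with e | a' | b' <;>
  · rw [Fintype.sum_sum_type]
    rw [Fintype.sum_sum_type]
    simp [incM, Finset.sum_ite_eq, Finset.sum_ite_eq']

lemma incM_supp (pL : α → Fin n) (pR : β → Fin n) (i : (α × β) ⊕ α ⊕ β) :
    (univ.filter (fun v => incM pL pR i v ≠ 0)).card = 2 := by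
  rcases i with e | a' | b'
  · have : (univ.filter (fun v => incM pL pR (Sum.inl e) v ≠ 0))
        = {Sum.inl e.1, Sum.inr (Sum.inl e.2)} := by
      ext v
      rcases v with a | b | j <;> simp [incM, eq_comm] <;> (try (split_ifs with h <;> simp [h]))
    rw [this]; simp
  · have : (univ.filter (fun v => incM pL pR (Sum.inr (Sum.inl a')) v ≠ 0))
        = {Sum.inl a', Sum.inr (Sum.inr (pL a'))} := by
      ext v
      rcases v with a | b | j <;> simp [incM, eq_comm] <;> (try (split_ifs with h <;> simp [h]))
    rw [this]; simp
  · have : (univ.filter (fun v => incM pL pR (Sum.inr (Sum.inr b')) v ≠ 0))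
        = {Sum.inr (Sum.inl b'), Sum.inr (Sum.inr (pR b'))} := by
      ext v
      rcases v with a | b | j <;> simp [incM, eq_comm] <;> (try (split_ifs with h <;> simp [h]))
    rw [this]; simp

end Defs

section Step
variable {α β : Type*} [Fintype α] [Fintype β] [DecidableEq α] [DecidableEq β]
    {n : ℕ}

lemma step_s12 (pL : α → Fin n) (pR : β → Fin n)
    (E : Finset (α × β)) (w : α × β → ℝ) (x : α × β → ℝ)
    (hx : lpFeasible pL pR E x) (hne : (fracE E x).Nonempty) :
    ∃ x' : α × β → ℝ, lpFeasible pL pR E x' ∧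
      (∑ e ∈ E, w e * x e ≤ ∑ e ∈ E, w e * x' e) ∧ mmu E x' < mmu E x := by
  classical
  obtain ⟨hb, hda, hdb, hbal⟩ := hx
  set F := fracE E x with hF
  set Af := fracA E x with hAf
  set Bf := fracB E x with hBf
  have hFE : F ⊆ E := fun e he => (mem_fracE.1 he).1
  have hFlt : ∀ e ∈ F, 0 < x e ∧ x e < 1 := by
    intro e he
    rw [hF, mem_fracE] at he
    obtain ⟨heE, hnot⟩ := he
    push_neg at hnot
    exact ⟨lt_of_le_of_ne (hb e heE).1 (Ne.symm hnot.1),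
      lt_of_le_of_ne (hb e heE).2 hnot.2⟩
  have hEint : ∀ e ∈ E, e ∉ F → IsIntR (x e) := by
    intro e he hf
    have h01 : x e = 0 ∨ x e = 1 := by
      by_contra h; exact hf (mem_fracE.2 ⟨he, h⟩)
    rcases h01 with h | h <;> rw [h]
    · exact IsIntR.zero
    · exact IsIntR.one
  have hdegA0 : ∀ a, 0 ≤ degA E x a :=
    fun a => Finset.sum_nonneg fun e he => (hb e (Finset.filter_subset _ _ he)).1
  have hdegB0 : ∀ b, 0 ≤ degB E x b :=
    fun b => Finset.sum_nonneg fun e he => (hb e (Finset.filter_subset _ _ he)).1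
  -- the arc set
  set A : Finset ((α × β) ⊕ α ⊕ β) :=
    F.image Sum.inl ∪ Af.image (fun a => Sum.inr (Sum.inl a))
      ∪ Bf.image (fun b => Sum.inr (Sum.inr b)) with hA
  have memAe : ∀ e : α × β, Sum.inl e ∈ A ↔ e ∈ F := by intro e; simp [hA]
  have memAa : ∀ a : α, Sum.inr (Sum.inl a) ∈ A ↔ a ∈ Af := by intro a; simp [hA]
  have memAb : ∀ b : β, Sum.inr (Sum.inr b) ∈ A ↔ b ∈ Bf := by intro b; simp [hA]
  -- filters of A at each vertex
  have hfiltA : ∀ a : α, A.filter (fun i => incM pL pR i (Sum.inl a) ≠ 0)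
      = (F.filter (fun e => e.1 = a)).image Sum.inl
        ∪ (Af.filter (fun a' => a' = a)).image (fun a' => Sum.inr (Sum.inl a')) := by
    intro a
    ext i
    rcases i with e | a' | b' <;>
      simp [incM, memAe, memAa, memAb, Finset.mem_filter, hA] <;>
      split_ifs with h <;> simp_all
  have hfiltB : ∀ b : β, A.filter (fun i => incM pL pR i (Sum.inr (Sum.inl b)) ≠ 0)
      = (F.filter (fun e => e.2 = b)).image Sum.inl
        ∪ (Bf.filter (fun b' => b' = b)).image (fun b' => Sum.inr (Sum.inr b')) := by
    intro b
    ext i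
    rcases i with e | a' | b' <;>
      simp [incM, memAe, memAa, memAb, Finset.mem_filter, hA] <;>
      split_ifs with h <;> simp_all
  have hfiltI : ∀ i : Fin n, A.filter (fun j => incM pL pR j (Sum.inr (Sum.inr i)) ≠ 0)
      = (Af.filter (fun a' => pL a' = i)).image (fun a' => Sum.inr (Sum.inl a'))
        ∪ (Bf.filter (fun b' => pR b' = i)).image (fun b' => Sum.inr (Sum.inr b')) := by
    intro i
    ext j
    rcases j with e | a' | b' <;>
      simp [incM, memAe, memAa, memAb, Finset.mem_filter, hA] <;>
      split_ifs with h <;> simp_all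
  -- degree of each vertex in the arc graph is ≠ 1
  have hinj2 : Function.Injective (fun a' : α => (Sum.inr (Sum.inl a') : (α × β) ⊕ α ⊕ β)) :=
    fun x y h => by simpa using h
  have hinj3 : Function.Injective (fun b' : β => (Sum.inr (Sum.inr b') : (α × β) ⊕ α ⊕ β)) :=
    fun x y h => by simpa using h
  have hdeg : ∀ v, (A.filter (fun i => incM pL pR i v ≠ 0)).card ≠ 1 := by
    rintro (a | b | i) h1
    · rw [hfiltA a, Finset.card_union_of_disjoint, Finset.card_image_of_injective _ Sum.inl_injective,
        Finset.card_image_of_injective _ hinj2, Finset.filter_eq'] at h1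
      swap
      · simp [Finset.disjoint_left]
      by_cases haf : a ∈ Af
      · rw [if_pos haf] at h1
        simp only [Finset.card_singleton] at h1
        have hc0 : (F.filter (fun e => e.1 = a)).card = 0 := by omega
        rw [Finset.card_eq_zero] at hc0
        have hint : IsIntR (degA E x a) := by
          apply IsIntR.sum
          intro e he
          rw [Finset.mem_filter] at he
          refine hEint e he.1 (fun hef => ?_)
          have : e ∈ F.filter (fun e => e.1 = a) := Finset.mem_filter.2 ⟨hef, he.2⟩
          simp [hc0] at this
        exact (mem_fracA.1 haf) hint
      · rw [if_neg haf] at h1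
        simp only [Finset.card_empty, add_zero] at h1
        obtain ⟨e0, he0⟩ := Finset.card_eq_one.1 h1
        have he0F : e0 ∈ F ∧ e0.1 = a := by
          have : e0 ∈ F.filter (fun e => e.1 = a) := by rw [he0]; exact Finset.mem_singleton_self e0
          exact Finset.mem_filter.1 this
        have hnotint : ¬ IsIntR (degA E x a) := by
          apply not_isIntR_sum _ _ e0 (Finset.mem_filter.2 ⟨hFE he0F.1, he0F.2⟩)
          · exact not_isIntR (hFlt e0 he0F.1).1 (hFlt e0 he0F.1).2
          · intro e he hene
            rw [Finset.mem_filter] at he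
            refine hEint e he.1 (fun hef => ?_)
            have : e ∈ F.filter (fun e => e.1 = a) := Finset.mem_filter.2 ⟨hef, he.2⟩
            rw [he0, Finset.mem_singleton] at this
            exact hene this
        have : a ∈ fracA E x := mem_fracA.2 hnotint
        rw [← hAf] at this
        exact haf this
    · rw [hfiltB b, Finset.card_union_of_disjoint, Finset.card_image_of_injective _ Sum.inl_injective,
        Finset.card_image_of_injective _ hinj3, Finset.filter_eq'] at h1
      swap
      · simp [Finset.disjoint_left]
      by_cases hbf : b ∈ Bf
      · rw [if_pos hbf] at h1
        simp only [Finset.card_singleton] at h1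
        have hc0 : (F.filter (fun e => e.2 = b)).card = 0 := by omega
        rw [Finset.card_eq_zero] at hc0
        have hint : IsIntR (degB E x b) := by
          apply IsIntR.sum
          intro e he
          rw [Finset.mem_filter] at he
          refine hEint e he.1 (fun hef => ?_)
          have : e ∈ F.filter (fun e => e.2 = b) := Finset.mem_filter.2 ⟨hef, he.2⟩
          simp [hc0] at this
        exact (mem_fracB.1 hbf) hint
      · rw [if_neg hbf] at h1
        simp only [Finset.card_empty, add_zero] at h1
        obtain ⟨e0, he0⟩ := Finset.card_eq_one.1 h1
        have he0F : e0 ∈ F ∧ e0.2 = b := by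
          have : e0 ∈ F.filter (fun e => e.2 = b) := by rw [he0]; exact Finset.mem_singleton_self e0
          exact Finset.mem_filter.1 this
        have hnotint : ¬ IsIntR (degB E x b) := by
          apply not_isIntR_sum _ _ e0 (Finset.mem_filter.2 ⟨hFE he0F.1, he0F.2⟩)
          · exact not_isIntR (hFlt e0 he0F.1).1 (hFlt e0 he0F.1).2
          · intro e he hene
            rw [Finset.mem_filter] at he
            refine hEint e he.1 (fun hef => ?_)
            have : e ∈ F.filter (fun e => e.2 = b) := Finset.mem_filter.2 ⟨hef, he.2⟩
            rw [he0, Finset.mem_singleton] at this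
            exact hene this
        have : b ∈ fracB E x := mem_fracB.2 hnotint
        rw [← hBf] at this
        exact hbf this
    · rw [hfiltI i, Finset.card_union_of_disjoint, Finset.card_image_of_injective _ hinj2,
        Finset.card_image_of_injective _ hinj3] at h1
      swap
      · simp [Finset.disjoint_left]
      -- integrality helpers for groups
      have hLint : ∀ a, pL a = i → a ∉ Af → IsIntR (degA E x a) := by
        intro a _ ha
        by_contra hni
        exact ha (by rw [hAf]; exact mem_fracA.2 hni)
      have hRint : ∀ b, pR b = i → b ∉ Bf → IsIntR (degB E x b) := by
        intro b _ hbnot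
        by_contra hni
        exact hbnot (by rw [hBf]; exact mem_fracB.2 hni)
      have hbali : ∑ a ∈ univ.filter (fun a => pL a = i), degA E x a
          = ∑ b ∈ univ.filter (fun b => pR b = i), degB E x b := hbal i
      rcases Nat.add_eq_one_iff.1 h1 with ⟨hA1, hB1⟩ | ⟨hA1, hB1⟩
      · -- Af side empty, Bf side singleton
        rw [Finset.card_eq_zero] at hA1
        obtain ⟨b0, hb0⟩ := Finset.card_eq_one.1 hB1
        have hb0m : b0 ∈ Bf ∧ pR b0 = i := by
          have : b0 ∈ Bf.filter (fun b' => pR b' = i) := by rw [hb0]; exact Finset.mem_singleton_self b0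
          exact Finset.mem_filter.1 this
        have hLHS : IsIntR (∑ a ∈ univ.filter (fun a => pL a = i), degA E x a) := by
          apply IsIntR.sum
          intro a ha
          rw [Finset.mem_filter] at ha
          refine hLint a ha.2 (fun haf => ?_)
          have : a ∈ Af.filter (fun a' => pL a' = i) := Finset.mem_filter.2 ⟨haf, ha.2⟩
          simp [hA1] at this
        have hRHS : ¬ IsIntR (∑ b ∈ univ.filter (fun b => pR b = i), degB E x b) := by
          apply not_isIntR_sum _ _ b0 (Finset.mem_filter.2 ⟨Finset.mem_univ b0, hb0m.2⟩)
          · exact mem_fracB.1 (by rw [← hBf]; exact hb0m.1)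
          · intro b hbm hbne
            rw [Finset.mem_filter] at hbm
            refine hRint b hbm.2 (fun hbff => ?_)
            have : b ∈ Bf.filter (fun b' => pR b' = i) := Finset.mem_filter.2 ⟨hbff, hbm.2⟩
            rw [hb0, Finset.mem_singleton] at this
            exact hbne this
        rw [hbali] at hLHS
        exact hRHS hLHS
      · rw [Finset.card_eq_zero] at hB1
        obtain ⟨a0, ha0⟩ := Finset.card_eq_one.1 hA1
        have ha0m : a0 ∈ Af ∧ pL a0 = i := by
          have : a0 ∈ Af.filter (fun a' => pL a' = i) := by rw [ha0]; exact Finset.mem_singleton_self a0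
          exact Finset.mem_filter.1 this
        have hRHS : IsIntR (∑ b ∈ univ.filter (fun b => pR b = i), degB E x b) := by
          apply IsIntR.sum
          intro b hbm
          rw [Finset.mem_filter] at hbm
          refine hRint b hbm.2 (fun hbff => ?_)
          have : b ∈ Bf.filter (fun b' => pR b' = i) := Finset.mem_filter.2 ⟨hbff, hbm.2⟩
          simp [hB1] at this
        have hLHS : ¬ IsIntR (∑ a ∈ univ.filter (fun a => pL a = i), degA E x a) := by
          apply not_isIntR_sum _ _ a0 (Finset.mem_filter.2 ⟨Finset.mem_univ a0, ha0m.2⟩)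
          · exact mem_fracA.1 (by rw [← hAf]; exact ha0m.1)
          · intro a ham hane
            rw [Finset.mem_filter] at ham
            refine hLint a ham.2 (fun haff => ?_)
            have : a ∈ Af.filter (fun a' => pL a' = i) := Finset.mem_filter.2 ⟨haff, ham.2⟩
            rw [ha0, Finset.mem_singleton] at this
            exact hane this
        rw [hbali] at hLHS
        exact hLHS hRHS
  -- apply the dependence lemma
  have hAne : A.Nonempty := by
    obtain ⟨e, he⟩ := hne
    exact ⟨Sum.inl e, (memAe e).2 (by rw [hF]; exact he)⟩
  obtain ⟨d, hdsupp, hdnz, hcons⟩ := exists_dep A (incM pL pR)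
    (fun i _ => incM_sum pL pR i) (fun i _ => incM_supp pL pR i) hdeg hAne
  set dE : α × β → ℝ := fun e => d (Sum.inl e) with hdE
  set dAv : α → ℝ := fun a => d (Sum.inr (Sum.inl a)) with hdAv
  set dBv : β → ℝ := fun b => d (Sum.inr (Sum.inr b)) with hdBv
  have hdEsupp : ∀ e, e ∉ F → dE e = 0 := fun e he =>
    hdsupp _ (fun hmem => he ((memAe e).1 hmem))
  have hdAsupp : ∀ a, a ∉ Af → dAv a = 0 := fun a ha =>
    hdsupp _ (fun hmem => ha ((memAa a).1 hmem))
  have hdBsupp : ∀ b, b ∉ Bf → dBv b = 0 := fun b hbb =>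
    hdsupp _ (fun hmem => hbb ((memAb b).1 hmem))
  -- conservation at left vertices
  have conAu : ∀ a, ∑ e ∈ univ.filter (fun e : α × β => e.1 = a), dE e = dAv a := by
    intro a
    have h := hcons (Sum.inl a)
    rw [Fintype.sum_sum_type, Fintype.sum_sum_type] at h
    have p1 : ∑ e : α × β, d (Sum.inl e) * incM pL pR (Sum.inl e) (Sum.inl a)
        = ∑ e ∈ univ.filter (fun e : α × β => e.1 = a), dE e := by
      rw [Finset.sum_filter]
      exact Finset.sum_congr rfl (fun e _ => by
        simp only [incM]; split_ifs <;> simp [hdE])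
    have p2 : ∑ a' : α, d (Sum.inr (Sum.inl a')) * incM pL pR (Sum.inr (Sum.inl a')) (Sum.inl a)
        = -dAv a := by
      have : ∀ a' : α, d (Sum.inr (Sum.inl a')) * incM pL pR (Sum.inr (Sum.inl a')) (Sum.inl a)
          = if a' = a then -dAv a' else 0 := by
        intro a'
        simp only [incM]; split_ifs <;> simp [hdAv]
      rw [Finset.sum_congr rfl (fun a' _ => this a'), Finset.sum_ite_eq' univ a (fun a' => -dAv a')]
      simp
    have p3 : ∑ b' : β, d (Sum.inr (Sum.inr b')) * incM pL pR (Sum.inr (Sum.inr b')) (Sum.inl a)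
        = 0 := by
      apply Finset.sum_eq_zero; intro b' _; simp [incM]
    rw [p1, p2, p3] at h
    linarith
  have conBu : ∀ b, ∑ e ∈ univ.filter (fun e : α × β => e.2 = b), dE e = dBv b := by
    intro b
    have h := hcons (Sum.inr (Sum.inl b))
    rw [Fintype.sum_sum_type, Fintype.sum_sum_type] at h
    have p1 : ∑ e : α × β, d (Sum.inl e) * incM pL pR (Sum.inl e) (Sum.inr (Sum.inl b))
        = -∑ e ∈ univ.filter (fun e : α × β => e.2 = b), dE e := by
      rw [Finset.sum_filter, ← Finset.sum_neg_distrib]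
      exact Finset.sum_congr rfl (fun e _ => by
        simp only [incM]; split_ifs <;> simp [hdE])
    have p2 : ∑ a' : α, d (Sum.inr (Sum.inl a')) * incM pL pR (Sum.inr (Sum.inl a')) (Sum.inr (Sum.inl b))
        = 0 := by
      apply Finset.sum_eq_zero; intro a' _; simp [incM]
    have p3 : ∑ b' : β, d (Sum.inr (Sum.inr b')) * incM pL pR (Sum.inr (Sum.inr b')) (Sum.inr (Sum.inl b))
        = dBv b := by
      have : ∀ b' : β, d (Sum.inr (Sum.inr b')) * incM pL pR (Sum.inr (Sum.inr b')) (Sum.inr (Sum.inl b))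
          = if b' = b then dBv b' else 0 := by
        intro b'
        simp only [incM]; split_ifs <;> simp [hdBv]
      rw [Finset.sum_congr rfl (fun b' _ => this b'), Finset.sum_ite_eq' univ b (fun b' => dBv b')]
      simp
    rw [p1, p2, p3] at h
    linarith
  have conI : ∀ i : Fin n, ∑ a ∈ univ.filter (fun a => pL a = i), dAv a
      = ∑ b ∈ univ.filter (fun b => pR b = i), dBv b := by
    intro i
    have h := hcons (Sum.inr (Sum.inr i))
    rw [Fintype.sum_sum_type, Fintype.sum_sum_type] at h
    have p1 : ∑ e : α × β, d (Sum.inl e) * incM pL pR (Sum.inl e) (Sum.inr (Sum.inr i))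
        = 0 := by
      apply Finset.sum_eq_zero; intro e _; simp [incM]
    have p2 : ∑ a' : α, d (Sum.inr (Sum.inl a')) * incM pL pR (Sum.inr (Sum.inl a')) (Sum.inr (Sum.inr i))
        = ∑ a ∈ univ.filter (fun a => pL a = i), dAv a := by
      rw [Finset.sum_filter]
      exact Finset.sum_congr rfl (fun a' _ => by
        simp only [incM]; split_ifs <;> simp [hdAv])
    have p3 : ∑ b' : β, d (Sum.inr (Sum.inr b')) * incM pL pR (Sum.inr (Sum.inr b')) (Sum.inr (Sum.inr i))
        = -∑ b ∈ univ.filter (fun b => pR b = i), dBv b := by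
      rw [Finset.sum_filter, ← Finset.sum_neg_distrib]
      exact Finset.sum_congr rfl (fun b' _ => by
        simp only [incM]; split_ifs <;> simp [hdBv])
    rw [p1, p2, p3] at h
    linarith
  -- E-restricted conservation
  have conA : ∀ a, ∑ e ∈ E.filter (fun e => e.1 = a), dE e = dAv a := by
    intro a
    rw [← conAu a]
    apply Finset.sum_subset (Finset.filter_subset_filter _ (Finset.subset_univ E))
    intro e he hne2
    rw [Finset.mem_filter] at he
    apply hdEsupp
    intro hef
    exact hne2 (Finset.mem_filter.2 ⟨hFE hef, he.2⟩)
  have conB : ∀ b, ∑ e ∈ E.filter (fun e => e.2 = b), dE e = dBv b := by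
    intro b
    rw [← conBu b]
    apply Finset.sum_subset (Finset.filter_subset_filter _ (Finset.subset_univ E))
    intro e he hne2
    rw [Finset.mem_filter] at he
    apply hdEsupp
    intro hef
    exact hne2 (Finset.mem_filter.2 ⟨hFE hef, he.2⟩)
  -- some fractional edge with nonzero direction
  have hedge : ∃ e ∈ F, dE e ≠ 0 := by
    have key : ∃ e : α × β, dE e ≠ 0 := by
      obtain ⟨i1, hi1A, hi1⟩ := hdnz
      rcases i1 with e | a' | b'
      · exact ⟨e, hi1⟩
      · have h := conAu a'
        have : dAv a' ≠ 0 := hi1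
        rw [← h] at this
        obtain ⟨e, _, he⟩ := Finset.exists_ne_zero_of_sum_ne_zero this
        exact ⟨e, he⟩
      · have h := conBu b'
        have : dBv b' ≠ 0 := hi1
        rw [← h] at this
        obtain ⟨e, _, he⟩ := Finset.exists_ne_zero_of_sum_ne_zero this
        exact ⟨e, he⟩
    obtain ⟨e, he⟩ := key
    refine ⟨e, ?_, he⟩
    by_contra hef
    exact he (hdEsupp e hef)
  -- direction sign
  set s : ℝ := if 0 ≤ ∑ e ∈ E, w e * dE e then 1 else -1 with hs
  have hsne : s ≠ 0 := by
    rw [hs]; split_ifs <;> norm_num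
  have hsobj : 0 ≤ s * ∑ e ∈ E, w e * dE e := by
    rw [hs]; split_ifs with h
    · simpa using h
    · push_neg at h
      nlinarith
  -- the caps
  set C : Finset ℝ :=
    ((F.filter (fun e => dE e ≠ 0)).image (fun e => capf (x e) (s * dE e)))
      ∪ ((Af.filter (fun a => dAv a ≠ 0)).image (fun a => capf (degA E x a) (s * dAv a)))
      ∪ ((Bf.filter (fun b => dBv b ≠ 0)).image (fun b => capf (degB E x b) (s * dBv b)))
    with hC
  have hCne : C.Nonempty := by
    obtain ⟨e, heF, hed⟩ := hedge
    exact ⟨capf (x e) (s * dE e), by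
      rw [hC]
      apply Finset.mem_union_left
      apply Finset.mem_union_left
      exact Finset.mem_image_of_mem _ (Finset.mem_filter.2 ⟨heF, hed⟩)⟩
  set t : ℝ := C.min' hCne with ht
  have ht0 : 0 ≤ t := by
    apply Finset.le_min'
    intro y hy
    rw [hC, Finset.mem_union, Finset.mem_union] at hy
    rcases hy with (hy | hy) | hy <;> obtain ⟨z, hz, rfl⟩ := Finset.mem_image.1 hy
    · rw [Finset.mem_filter] at hz
      exact capf_nonneg (hb z (hFE hz.1)).1 (hb z (hFE hz.1)).2
    · exact capf_nonneg (hdegA0 z) (hda z)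
    · exact capf_nonneg (hdegB0 z) (hdb z)
  -- the new point
  set x' : α × β → ℝ := fun e => x e + t * (s * dE e) with hx'
  have hx'of0 : ∀ e, dE e = 0 → x' e = x e := by
    intro e h0; rw [hx']; simp [h0]
  have hx'F : ∀ e, e ∉ F → x' e = x e := fun e he => hx'of0 e (hdEsupp e he)
  -- bounds
  have hb' : ∀ e ∈ E, 0 ≤ x' e ∧ x' e ≤ 1 := by
    intro e he
    by_cases h0 : dE e = 0
    · rw [hx'of0 e h0]; exact hb e he
    · have heF : e ∈ F := by
        by_contra hf; exact h0 (hdEsupp e hf)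
      have hu : s * dE e ≠ 0 := mul_ne_zero hsne h0
      have hmem : capf (x e) (s * dE e) ∈ C := by
        rw [hC]
        exact Finset.mem_union_left _ (Finset.mem_union_left _
          (Finset.mem_image_of_mem _ (Finset.mem_filter.2 ⟨heF, h0⟩)))
      exact capf_bound hu (hb e he).1 (hb e he).2 ht0 (Finset.min'_le C _ hmem)
  -- degrees of x'
  have hdegA' : ∀ a, degA E x' a = degA E x a + t * s * dAv a := by
    intro a
    unfold degA
    rw [← conA a, Finset.mul_sum, ← Finset.sum_add_distrib]
    exact Finset.sum_congr rfl (fun e _ => by rw [hx']; ring)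
  have hdegB' : ∀ b, degB E x' b = degB E x b + t * s * dBv b := by
    intro b
    unfold degB
    rw [← conB b, Finset.mul_sum, ← Finset.sum_add_distrib]
    exact Finset.sum_congr rfl (fun e _ => by rw [hx']; ring)
  have hda' : ∀ a, degA E x' a ≤ 1 := by
    intro a
    rw [hdegA' a]
    by_cases h0 : dAv a = 0
    · simpa [h0, degA] using hda a
    · have haf : a ∈ Af := by
        by_contra hna; exact h0 (hdAsupp a hna)
      have hu : s * dAv a ≠ 0 := mul_ne_zero hsne h0
      have hmem : capf (degA E x a) (s * dAv a) ∈ C := by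
        rw [hC]
        exact Finset.mem_union_left _ (Finset.mem_union_right _
          (Finset.mem_image_of_mem _ (Finset.mem_filter.2 ⟨haf, h0⟩)))
      have := (capf_bound hu (hdegA0 a) (hda a) ht0 (Finset.min'_le C _ hmem)).2
      nlinarith [this]
  have hdb' : ∀ b, degB E x' b ≤ 1 := by
    intro b
    rw [hdegB' b]
    by_cases h0 : dBv b = 0
    · simpa [h0, degB] using hdb b
    · have hbf : b ∈ Bf := by
        by_contra hnb; exact h0 (hdBsupp b hnb)
      have hu : s * dBv b ≠ 0 := mul_ne_zero hsne h0
      have hmem : capf (degB E x b) (s * dBv b) ∈ C := by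
        rw [hC]
        exact Finset.mem_union_right _
          (Finset.mem_image_of_mem _ (Finset.mem_filter.2 ⟨hbf, h0⟩))
      have := (capf_bound hu (hdegB0 b) (hdb b) ht0 (Finset.min'_le C _ hmem)).2
      nlinarith [this]
  have hbal' : ∀ i : Fin n,
      ∑ a ∈ univ.filter (fun a => pL a = i), degA E x' a
        = ∑ b ∈ univ.filter (fun b => pR b = i), degB E x' b := by
    intro i
    calc ∑ a ∈ univ.filter (fun a => pL a = i), degA E x' a
        = ∑ a ∈ univ.filter (fun a => pL a = i), (degA E x a + t * s * dAv a) :=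
          Finset.sum_congr rfl (fun a _ => hdegA' a)
      _ = (∑ a ∈ univ.filter (fun a => pL a = i), degA E x a)
            + t * s * ∑ a ∈ univ.filter (fun a => pL a = i), dAv a := by
          rw [Finset.sum_add_distrib, Finset.mul_sum]
      _ = (∑ b ∈ univ.filter (fun b => pR b = i), degB E x b)
            + t * s * ∑ b ∈ univ.filter (fun b => pR b = i), dBv b := by
          rw [show (∑ a ∈ univ.filter (fun a => pL a = i), degA E x a)
              = ∑ b ∈ univ.filter (fun b => pR b = i), degB E x b from hbal i, conI i]
      _ = ∑ b ∈ univ.filter (fun b => pR b = i), (degB E x b + t * s * dBv b) := by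
          rw [Finset.sum_add_distrib, Finset.mul_sum]
      _ = ∑ b ∈ univ.filter (fun b => pR b = i), degB E x' b :=
          Finset.sum_congr rfl (fun b _ => (hdegB' b).symm)
  have hfeas' : lpFeasible pL pR E x' := ⟨hb', hda', hdb', hbal'⟩
  -- objective does not decrease
  have hobj : ∑ e ∈ E, w e * x e ≤ ∑ e ∈ E, w e * x' e := by
    have hexp : ∑ e ∈ E, w e * x' e
        = ∑ e ∈ E, w e * x e + t * (s * ∑ e ∈ E, w e * dE e) := by
      rw [Finset.mul_sum, Finset.mul_sum, ← Finset.sum_add_distrib]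
      exact Finset.sum_congr rfl (fun e _ => by rw [hx']; ring)
    rw [hexp]
    nlinarith [mul_nonneg ht0 hsobj]
  -- subsets
  have hFsub : fracE E x' ⊆ F := by
    intro e he
    rw [mem_fracE] at he
    by_contra hf
    have hxx : x' e = x e := hx'F e hf
    have h01 : x e = 0 ∨ x e = 1 := by
      by_contra h; exact hf (mem_fracE.2 ⟨he.1, h⟩)
    rw [hxx] at he
    exact he.2 h01
  have hAsub : fracA E x' ⊆ Af := by
    intro a ha
    rw [mem_fracA] at ha
    by_contra haf
    have h0 : dAv a = 0 := hdAsupp a haf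
    have hint : IsIntR (degA E x a) := by
      by_contra h; exact haf (mem_fracA.2 h)
    have : degA E x' a = degA E x a := by rw [hdegA']; simp [h0]
    rw [this] at ha
    exact ha hint
  have hBsub : fracB E x' ⊆ Bf := by
    intro b hbb
    rw [mem_fracB] at hbb
    by_contra hbf
    have h0 : dBv b = 0 := hdBsupp b hbf
    have hint : IsIntR (degB E x b) := by
      by_contra h; exact hbf (mem_fracB.2 h)
    have : degB E x' b = degB E x b := by rw [hdegB']; simp [h0]
    rw [this] at hbb
    exact hbb hint
  -- strict decrease: the minimizer becomes integral
  have htC : t ∈ C := Finset.min'_mem C hCne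
  have hlt : mmu E x' < mmu E x := by
    have hle1 : (fracE E x').card ≤ F.card := Finset.card_le_card hFsub
    have hle2 : (fracA E x').card ≤ Af.card := Finset.card_le_card hAsub
    have hle3 : (fracB E x').card ≤ Bf.card := Finset.card_le_card hBsub
    rw [hC, Finset.mem_union, Finset.mem_union] at htC
    have hmmux : mmu E x = F.card + Af.card + Bf.card := rfl
    have hmmux' : mmu E x' = (fracE E x').card + (fracA E x').card + (fracB E x').card := rfl
    rcases htC with (hy | hy) | hy <;> obtain ⟨z, hz, hzt⟩ := Finset.mem_image.1 hy <;>
      rw [Finset.mem_filter] at hz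
    · -- an edge becomes integral
      have hu : s * dE z ≠ 0 := mul_ne_zero hsne hz.2
      have hhit : x' z = 0 ∨ x' z = 1 := by
        have := capf_hit (v := x z) hu
        rw [hzt] at this
        rw [hx']
        simpa [mul_comm, mul_assoc, mul_left_comm] using this
      have hznot : z ∉ fracE E x' := by
        rw [mem_fracE]
        push_neg
        intro _
        exact hhit
      have : (fracE E x').card < F.card :=
        Finset.card_lt_card ((Finset.ssubset_iff_of_subset hFsub).2 ⟨z, hz.1, hznot⟩)
      omega
    · -- a left-degree becomes integral
      have hu : s * dAv z ≠ 0 := mul_ne_zero hsne hz.2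
      have hhit : degA E x' z = 0 ∨ degA E x' z = 1 := by
        have := capf_hit (v := degA E x z) hu
        rw [hzt] at this
        rw [hdegA']
        rcases this with h | h
        · left; rw [← h]; ring
        · right; rw [← h]; ring
      have hint : IsIntR (degA E x' z) := by
        rcases hhit with h | h <;> rw [h]
        · exact IsIntR.zero
        · exact IsIntR.one
      have hznot : z ∉ fracA E x' := by
        rw [mem_fracA]; exact not_not.2 hint
      have : (fracA E x').card < Af.card :=
        Finset.card_lt_card ((Finset.ssubset_iff_of_subset hAsub).2 ⟨z, hz.1, hznot⟩)
      omega
    · -- a right-degree becomes integral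
      have hu : s * dBv z ≠ 0 := mul_ne_zero hsne hz.2
      have hhit : degB E x' z = 0 ∨ degB E x' z = 1 := by
        have := capf_hit (v := degB E x z) hu
        rw [hzt] at this
        rw [hdegB']
        rcases this with h | h
        · left; rw [← h]; ring
        · right; rw [← h]; ring
      have hint : IsIntR (degB E x' z) := by
        rcases hhit with h | h <;> rw [h]
        · exact IsIntR.zero
        · exact IsIntR.one
      have hznot : z ∉ fracB E x' := by
        rw [mem_fracB]; exact not_not.2 hint
      have : (fracB E x').card < Bf.card :=
        Finset.card_lt_card ((Finset.ssubset_iff_of_subset hBsub).2 ⟨z, hz.1, hznot⟩)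
      omega
  exact ⟨x', hfeas', hobj, hlt⟩

end Step


lemma lpFeasible_congr {α β : Type*} [Fintype α] [Fintype β] [DecidableEq α] [DecidableEq β]
    {n : ℕ} (pL : α → Fin n) (pR : β → Fin n) (E : Finset (α × β))
    {x y : α × β → ℝ} (h : ∀ e ∈ E, x e = y e) (hx : lpFeasible pL pR E x) :
    lpFeasible pL pR E y := by
  obtain ⟨hb, hda, hdb, hbal⟩ := hx
  have hsumA : ∀ a, ∑ e ∈ E.filter (fun e => e.1 = a), y e
      = ∑ e ∈ E.filter (fun e => e.1 = a), x e :=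
    fun a => Finset.sum_congr rfl (fun e he => (h e (Finset.filter_subset _ _ he)).symm)
  have hsumB : ∀ b, ∑ e ∈ E.filter (fun e => e.2 = b), y e
      = ∑ e ∈ E.filter (fun e => e.2 = b), x e :=
    fun b => Finset.sum_congr rfl (fun e he => (h e (Finset.filter_subset _ _ he)).symm)
  refine ⟨fun e he => by rw [← h e he]; exact hb e he, ?_, ?_, ?_⟩
  · intro a; rw [hsumA a]; exact hda a
  · intro b; rw [hsumB b]; exact hdb b
  · intro i
    rw [Finset.sum_congr rfl (fun a _ => hsumA a), Finset.sum_congr rfl (fun b _ => hsumB b)]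
    exact hbal i

lemma roundLP {α β : Type*} [Fintype α] [Fintype β] [DecidableEq α] [DecidableEq β]
    {n : ℕ} (pL : α → Fin n) (pR : β → Fin n) (E : Finset (α × β)) (w : α × β → ℝ) :
    ∀ (N : ℕ) (x : α × β → ℝ), mmu E x ≤ N → lpFeasible pL pR E x →
      ∃ z, lpFeasible pL pR E z ∧ (∀ e ∈ E, z e = 0 ∨ z e = 1) ∧
        ∑ e ∈ E, w e * x e ≤ ∑ e ∈ E, w e * z e := by
  intro N
  induction N with
  | zero =>
    intro x hmu hx
    refine ⟨x, hx, fun e he => ?_, le_refl _⟩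
    by_contra h
    push_neg at h
    have : e ∈ fracE E x := mem_fracE.2 ⟨he, by tauto⟩
    have : 1 ≤ (fracE E x).card := Finset.card_pos.2 ⟨e, this⟩
    have : 1 ≤ mmu E x := le_trans this (by unfold mmu; omega)
    omega
  | succ N ih =>
    intro x hmu hx
    by_cases hne : (fracE E x).Nonempty
    · obtain ⟨x', hx'f, hx'obj, hx'mu⟩ := step_s12 pL pR E w x hx hne
      obtain ⟨z, hzf, hzint, hzobj⟩ := ih x' (by omega) hx'f
      exact ⟨z, hzf, hzint, le_trans hx'obj hzobj⟩
    · refine ⟨x, hx, fun e he => ?_, le_refl _⟩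
      by_contra h
      push_neg at h
      exact hne ⟨e, mem_fracE.2 ⟨he, by tauto⟩⟩


/-- Integrality of the BarterSV LP when all item values are
equal: for any edge weights, the maximum of the linear objective over the
polytope is attained at a point whose coordinates are all 0 or 1. -/
theorem stmt12 {α β : Type*} [Fintype α] [Fintype β] [DecidableEq α] [DecidableEq β]
    {n : ℕ} (pL : α → Fin n) (pR : β → Fin n)
    (E : Finset (α × β)) (w : α × β → ℝ) :
    ∃ xstar : α × β → ℝ,
      lpFeasible pL pR E xstar ∧
      (∀ e ∈ E, xstar e = 0 ∨ xstar e = 1) ∧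
      (∀ y : α × β → ℝ, lpFeasible pL pR E y →
        ∑ e ∈ E, w e * y e ≤ ∑ e ∈ E, w e * xstar e) := by
  classical
  have hzero : lpFeasible pL pR E (fun _ => 0) := by
    refine ⟨fun e _ => by norm_num, fun a => by simp, fun b => by simp, fun i => by simp⟩
  set S : Finset (Finset (α × β)) :=
    E.powerset.filter (fun s => lpFeasible pL pR E (fun e => if e ∈ s then 1 else 0)) with hS
  have hSne : S.Nonempty := by
    refine ⟨∅, Finset.mem_filter.2 ⟨Finset.empty_mem_powerset E, ?_⟩⟩
    simpa using hzero
  obtain ⟨s0, hs0S, hs0max⟩ := Finset.exists_max_image S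
    (fun s => ∑ e ∈ E, w e * (if e ∈ s then 1 else 0)) hSne
  refine ⟨fun e => if e ∈ s0 then 1 else 0, (Finset.mem_filter.1 hs0S).2,
    fun e _ => by by_cases h : e ∈ s0 <;> simp [h], ?_⟩
  intro y hy
  obtain ⟨z, hzf, hzint, hobj⟩ := roundLP pL pR E w (mmu E y) y le_rfl hy
  set sz : Finset (α × β) := E.filter (fun e => z e = 1) with hsz
  have hagree : ∀ e ∈ E, z e = (if e ∈ sz then 1 else 0 : ℝ) := by
    intro e he
    rcases hzint e he with h | h
    · rw [if_neg, h]
      rw [hsz, Finset.mem_filter]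
      rintro ⟨-, h1⟩
      rw [h] at h1
      norm_num at h1
    · rw [if_pos, h]
      rw [hsz, Finset.mem_filter]
      exact ⟨he, h⟩
  have hszS : sz ∈ S := by
    rw [hS, Finset.mem_filter]
    exact ⟨Finset.mem_powerset.2 (Finset.filter_subset _ _),
      lpFeasible_congr pL pR E hagree hzf⟩
  calc ∑ e ∈ E, w e * y e ≤ ∑ e ∈ E, w e * z e := hobj
    _ = ∑ e ∈ E, w e * (if e ∈ sz then 1 else 0) :=
        Finset.sum_congr rfl (fun e he => by rw [hagree e he])
    _ ≤ ∑ e ∈ E, w e * (if e ∈ s0 then 1 else 0) := hs0max sz hszS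
end

section
/- Fix a capacitated barter LP: a finite bipartite graph (L,R,E) with vertices ℓ_{ij} ∈ L_i for items j ∈ H_i and r_{ij} ∈ R_i for items j ∈ W_i, edges e = (ℓ_{ij}, r_{i'j}) with weights w_e, item values v_j > 0, and integer capacities η_i(j) ≥ 1 and ω_i(j) ≥ 1; its feasible region consists of x : E → ℝ with x_e ≥ 0, x(ℓ_{ij}) ≤ η_i(j), x(r_{ij}) ≤ ω_i(j), and Σ_{a∈L_i} v_a·x(a) = Σ_{b∈R_i} v_b·x(b) for every i. Form the unit-capacity expansion: replace each ℓ_{ij} by η_i(j) copies and each r_{i'j} by ω_{i'}(j) copies, each of capacity 1; for each original edge (ℓ_{ij}, r_{i'j}) put an edge between every copy of ℓ_{ij} and every copy of r_{i'j}, with the same weight and the same item value v_j; its feasible region consists of z over the new edges with z_f ∈ [0,1], fractional degree at most 1 at every copy vertex, and the same per-agent value-balance equalities over the copies. Then the supremum of Σ_e w_e·x_e over the capacitated feasible region equals the supremum of Σ_f w_f·z_f over the unit-capacity feasible region. -/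
open Finset

lemma auxL {n : ℕ} {ι : Type*} (s : Finset ι) (F : ι → Finset (Fin n))
    (v : ι → ℝ) (m : ι → ℕ) (p : Fin n → ι → ℕ) (g : Fin n → ι → ℕ → ℕ → ℝ) :
    (∑ j ∈ s, ∑ k ∈ Finset.range (m j),
        v j * ∑ i' ∈ F j, ∑ k' ∈ Finset.range (p i' j), g i' j k k')
      = ∑ j ∈ s, v j * ∑ i' ∈ F j, ∑ k ∈ Finset.range (m j),
          ∑ k' ∈ Finset.range (p i' j), g i' j k k' := by
  refine Finset.sum_congr rfl fun j _ => ?_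
  rw [← Finset.mul_sum, Finset.sum_comm]

lemma auxR {n : ℕ} {ι : Type*} (s : Finset ι) (F : ι → Finset (Fin n))
    (v : ι → ℝ) (m : ι → ℕ) (p : Fin n → ι → ℕ) (g : Fin n → ι → ℕ → ℕ → ℝ) :
    (∑ j ∈ s, ∑ k' ∈ Finset.range (m j),
        v j * ∑ i'' ∈ F j, ∑ k ∈ Finset.range (p i'' j), g i'' j k k')
      = ∑ j ∈ s, v j * ∑ i'' ∈ F j, ∑ k ∈ Finset.range (p i'' j),
          ∑ k' ∈ Finset.range (m j), g i'' j k k' := by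
  refine Finset.sum_congr rfl fun j _ => ?_
  rw [← Finset.mul_sum, Finset.sum_comm]
  exact congrArg _ (Finset.sum_congr rfl fun i'' _ => Finset.sum_comm)


/-- Equivalence of the capacitated barter LP and its
unit-capacity expansion.  Agents `Fin n`, items `ι` with positive values `v`,
have-lists `H`, wishlists `W`, edge weights `w i i' j` for the edge
`(ℓ_{ij}, r_{i'j})` (present when `j ∈ H i ∩ W i'`), and integer capacities
`η i j ≥ 1`, `ω i j ≥ 1`.

The capacitated LP has variables `x i i' j ≥ 0` with fractional degree of
`ℓ_{ij}` at most `η i j`, of `r_{i'j}` at most `ω i' j`, and per-agent value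
balance.  The unit-capacity expansion replaces `ℓ_{ij}` by `η i j` copies
(indexed by `k < η i j`) and `r_{i'j}` by `ω i' j` copies (indexed by
`k' < ω i' j`), each of capacity 1, with an edge of the same weight between
every pair of corresponding copies; its variables are
`z i i' j k k' ∈ [0,1]` with fractional degree at most 1 at every copy and the
same per-agent value-balance equalities over the copies.

Then the suprema of the two objectives over the two feasible regions agree. -/
theorem stmt14 {n : ℕ} {ι : Type*} [Fintype ι] [DecidableEq ι]
    (H W : Fin n → Finset ι) (v : ι → ℝ) (hv : ∀ j, 0 < v j)
    (w : Fin n → Fin n → ι → ℝ)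
    (η ω : Fin n → ι → ℕ) (hη : ∀ i j, 1 ≤ η i j) (hω : ∀ i j, 1 ≤ ω i j) :
    sSup {u : ℝ | ∃ x : Fin n → Fin n → ι → ℝ,
        -- nonnegativity on edges
        (∀ i i' : Fin n, ∀ j ∈ H i, j ∈ W i' → 0 ≤ x i i' j) ∧
        -- capacity of each left vertex ℓ_{ij}
        (∀ i : Fin n, ∀ j ∈ H i,
          ∑ i' ∈ univ.filter (fun i' : Fin n => j ∈ W i'), x i i' j ≤ (η i j : ℝ)) ∧
        -- capacity of each right vertex r_{i'j}
        (∀ i' : Fin n, ∀ j ∈ W i',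
          ∑ i ∈ univ.filter (fun i : Fin n => j ∈ H i), x i i' j ≤ (ω i' j : ℝ)) ∧
        -- per-agent value balance
        (∀ i : Fin n,
          (∑ j ∈ H i, v j * ∑ i' ∈ univ.filter (fun i' : Fin n => j ∈ W i'), x i i' j)
            = ∑ j ∈ W i, v j * ∑ i'' ∈ univ.filter (fun i'' : Fin n => j ∈ H i''), x i'' i j) ∧
        -- u is the LP objective
        (∑ i : Fin n, ∑ i' : Fin n, ∑ j ∈ H i ∩ W i', w i i' j * x i i' j) = u}
      = sSup {u : ℝ | ∃ z : Fin n → Fin n → ι → ℕ → ℕ → ℝ,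
          -- unit box constraints on the edges between copies
          (∀ i i' : Fin n, ∀ j ∈ H i, j ∈ W i' →
            ∀ k < η i j, ∀ k' < ω i' j, 0 ≤ z i i' j k k' ∧ z i i' j k k' ≤ 1) ∧
          -- each copy of ℓ_{ij} has fractional degree at most 1
          (∀ i : Fin n, ∀ j ∈ H i, ∀ k < η i j,
            ∑ i' ∈ univ.filter (fun i' : Fin n => j ∈ W i'),
              ∑ k' ∈ Finset.range (ω i' j), z i i' j k k' ≤ 1) ∧
          -- each copy of r_{i'j} has fractional degree at most 1
          (∀ i' : Fin n, ∀ j ∈ W i', ∀ k' < ω i' j,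
            ∑ i ∈ univ.filter (fun i : Fin n => j ∈ H i),
              ∑ k ∈ Finset.range (η i j), z i i' j k k' ≤ 1) ∧
          -- per-agent value balance over the copies
          (∀ i : Fin n,
            (∑ j ∈ H i, ∑ k ∈ Finset.range (η i j),
              v j * ∑ i' ∈ univ.filter (fun i' : Fin n => j ∈ W i'),
                ∑ k' ∈ Finset.range (ω i' j), z i i' j k k')
              = ∑ j ∈ W i, ∑ k' ∈ Finset.range (ω i j),
                  v j * ∑ i'' ∈ univ.filter (fun i'' : Fin n => j ∈ H i''),
                    ∑ k ∈ Finset.range (η i'' j), z i'' i j k k') ∧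
          -- u is the expanded LP objective
          (∑ i : Fin n, ∑ i' : Fin n, ∑ j ∈ H i ∩ W i',
            ∑ k ∈ Finset.range (η i j), ∑ k' ∈ Finset.range (ω i' j),
              w i i' j * z i i' j k k') = u} := by

  congr 1
  ext u
  simp only [Set.mem_setOf_eq]
  constructor
  · rintro ⟨x, hx0, hL, hR, hB, hobj⟩
    have hpos : ∀ i i' : Fin n, ∀ j : ι, (0:ℝ) < (η i j : ℝ) * (ω i' j : ℝ) := by
      intro i i' j
      have h1 : (0:ℝ) < (η i j : ℝ) := by exact_mod_cast (hη i j)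
      have h2 : (0:ℝ) < (ω i' j : ℝ) := by exact_mod_cast (hω i' j)
      positivity
    refine ⟨fun i i' j _ _ => x i i' j / ((η i j : ℝ) * (ω i' j : ℝ)), ?_, ?_, ?_, ?_, ?_⟩
    · intro i i' j hj hj' k hk k' hk'
      have hxnn := hx0 i i' j hj hj'
      constructor
      · exact div_nonneg hxnn (hpos i i' j).le
      · rw [div_le_one (hpos i i' j)]
        have h1 : x i i' j ≤ ∑ i'' ∈ univ.filter (fun i'' : Fin n => j ∈ W i''), x i i'' j := by
          refine Finset.single_le_sum (f := fun i'' => x i i'' j) ?_ ?_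
          · intro a ha
            exact hx0 i a j hj (by simpa using ha)
          · simp [hj']
        have h2 : (∑ i'' ∈ univ.filter (fun i'' : Fin n => j ∈ W i''), x i i'' j) ≤ (η i j : ℝ) :=
          hL i j hj
        have h3 : (η i j : ℝ) ≤ (η i j : ℝ) * (ω i' j : ℝ) := by
          have h2' : (1:ℝ) ≤ (ω i' j : ℝ) := by exact_mod_cast (hω i' j)
          nlinarith [Nat.cast_nonneg (α := ℝ) (η i j)]
        linarith
    · intro i j hj k hk
      have hη0 : ((η i j : ℝ)) ≠ 0 := by
        have : (0:ℝ) < (η i j : ℝ) := by exact_mod_cast (hη i j)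
        linarith
      have hstep : ∀ i' : Fin n,
          (∑ k' ∈ Finset.range (ω i' j), x i i' j / ((η i j : ℝ) * (ω i' j : ℝ)))
            = x i i' j / (η i j : ℝ) := by
        intro i'
        have hω0 : ((ω i' j : ℝ)) ≠ 0 := by
          have : (0:ℝ) < (ω i' j : ℝ) := by exact_mod_cast (hω i' j)
          linarith
        rw [Finset.sum_const, Finset.card_range, nsmul_eq_mul]
        field_simp
      calc (∑ i' ∈ univ.filter (fun i' : Fin n => j ∈ W i'),
              ∑ k' ∈ Finset.range (ω i' j), x i i' j / ((η i j : ℝ) * (ω i' j : ℝ)))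
          = ∑ i' ∈ univ.filter (fun i' : Fin n => j ∈ W i'), x i i' j / (η i j : ℝ) :=
            Finset.sum_congr rfl fun i' _ => hstep i'
        _ = (∑ i' ∈ univ.filter (fun i' : Fin n => j ∈ W i'), x i i' j) / (η i j : ℝ) := by
            rw [Finset.sum_div]
        _ ≤ 1 := by
            rw [div_le_one (by exact_mod_cast (hη i j))]
            exact hL i j hj
    · intro i' j hj k' hk'
      have hstep : ∀ i : Fin n,
          (∑ k ∈ Finset.range (η i j), x i i' j / ((η i j : ℝ) * (ω i' j : ℝ)))
            = x i i' j / (ω i' j : ℝ) := by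
        intro i
        have hη0 : ((η i j : ℝ)) ≠ 0 := by
          have : (0:ℝ) < (η i j : ℝ) := by exact_mod_cast (hη i j)
          linarith
        have hω0 : ((ω i' j : ℝ)) ≠ 0 := by
          have : (0:ℝ) < (ω i' j : ℝ) := by exact_mod_cast (hω i' j)
          linarith
        rw [Finset.sum_const, Finset.card_range, nsmul_eq_mul]
        field_simp
      calc (∑ i ∈ univ.filter (fun i : Fin n => j ∈ H i),
              ∑ k ∈ Finset.range (η i j), x i i' j / ((η i j : ℝ) * (ω i' j : ℝ)))
          = ∑ i ∈ univ.filter (fun i : Fin n => j ∈ H i), x i i' j / (ω i' j : ℝ) :=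
            Finset.sum_congr rfl fun i _ => hstep i
        _ = (∑ i ∈ univ.filter (fun i : Fin n => j ∈ H i), x i i' j) / (ω i' j : ℝ) := by
            rw [Finset.sum_div]
        _ ≤ 1 := by
            rw [div_le_one (by exact_mod_cast (hω i' j))]
            exact hR i' j hj
    · intro i
      have hxz : ∀ i₁ i₂ : Fin n, ∀ j : ι,
          (∑ k ∈ Finset.range (η i₁ j), ∑ k' ∈ Finset.range (ω i₂ j),
            x i₁ i₂ j / ((η i₁ j : ℝ) * (ω i₂ j : ℝ))) = x i₁ i₂ j := by
        intro i₁ i₂ j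
        have hη0 : ((η i₁ j : ℝ)) ≠ 0 := by
          have : (0:ℝ) < (η i₁ j : ℝ) := by exact_mod_cast (hη i₁ j)
          linarith
        have hω0 : ((ω i₂ j : ℝ)) ≠ 0 := by
          have : (0:ℝ) < (ω i₂ j : ℝ) := by exact_mod_cast (hω i₂ j)
          linarith
        simp only [Finset.sum_const, Finset.card_range, nsmul_eq_mul]
        field_simp
      rw [auxL (H i) (fun j => univ.filter (fun i' : Fin n => j ∈ W i')) v
            (fun j => η i j) (fun i' j => ω i' j)
            (fun i' j k k' => x i i' j / ((η i j : ℝ) * (ω i' j : ℝ))),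
          auxR (W i) (fun j => univ.filter (fun i'' : Fin n => j ∈ H i'')) v
            (fun j => ω i j) (fun i'' j => η i'' j)
            (fun i'' j k k' => x i'' i j / ((η i'' j : ℝ) * (ω i j : ℝ)))]
      simp only [hxz]
      exact hB i
    · have hxz : ∀ i₁ i₂ : Fin n, ∀ j : ι,
          (∑ k ∈ Finset.range (η i₁ j), ∑ k' ∈ Finset.range (ω i₂ j),
            x i₁ i₂ j / ((η i₁ j : ℝ) * (ω i₂ j : ℝ))) = x i₁ i₂ j := by
        intro i₁ i₂ j
        have hη0 : ((η i₁ j : ℝ)) ≠ 0 := by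
          have : (0:ℝ) < (η i₁ j : ℝ) := by exact_mod_cast (hη i₁ j)
          linarith
        have hω0 : ((ω i₂ j : ℝ)) ≠ 0 := by
          have : (0:ℝ) < (ω i₂ j : ℝ) := by exact_mod_cast (hω i₂ j)
          linarith
        simp only [Finset.sum_const, Finset.card_range, nsmul_eq_mul]
        field_simp
      simp only [← Finset.mul_sum, hxz]
      exact hobj
  · rintro ⟨z, hbox, hL1, hR1, hB, hobj⟩
    refine ⟨fun i i' j => ∑ k ∈ Finset.range (η i j), ∑ k' ∈ Finset.range (ω i' j),
        z i i' j k k', ?_, ?_, ?_, ?_, ?_⟩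
    · intro i i' j hj hj'
      refine Finset.sum_nonneg fun k hk => Finset.sum_nonneg fun k' hk' => ?_
      exact (hbox i i' j hj hj' k (Finset.mem_range.mp hk) k' (Finset.mem_range.mp hk')).1
    · intro i j hj
      rw [Finset.sum_comm]
      calc (∑ k ∈ Finset.range (η i j), ∑ i' ∈ univ.filter (fun i' : Fin n => j ∈ W i'),
              ∑ k' ∈ Finset.range (ω i' j), z i i' j k k')
          ≤ ∑ k ∈ Finset.range (η i j), (1:ℝ) :=
            Finset.sum_le_sum fun k hk => hL1 i j hj k (Finset.mem_range.mp hk)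
        _ = (η i j : ℝ) := by simp
    · intro i' j hj
      have hswap : (∑ i ∈ univ.filter (fun i : Fin n => j ∈ H i),
            ∑ k ∈ Finset.range (η i j), ∑ k' ∈ Finset.range (ω i' j), z i i' j k k')
          = ∑ k' ∈ Finset.range (ω i' j), ∑ i ∈ univ.filter (fun i : Fin n => j ∈ H i),
              ∑ k ∈ Finset.range (η i j), z i i' j k k' := by
        rw [← Finset.sum_comm]
        exact Finset.sum_congr rfl fun i _ => Finset.sum_comm
      rw [hswap]
      calc (∑ k' ∈ Finset.range (ω i' j), ∑ i ∈ univ.filter (fun i : Fin n => j ∈ H i),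
              ∑ k ∈ Finset.range (η i j), z i i' j k k')
          ≤ ∑ k' ∈ Finset.range (ω i' j), (1:ℝ) :=
            Finset.sum_le_sum fun k' hk' => hR1 i' j hj k' (Finset.mem_range.mp hk')
        _ = (ω i' j : ℝ) := by simp
    · intro i
      rw [← auxL (H i) (fun j => univ.filter (fun i' : Fin n => j ∈ W i')) v
            (fun j => η i j) (fun i' j => ω i' j)
            (fun i' j k k' => z i i' j k k'),
          ← auxR (W i) (fun j => univ.filter (fun i'' : Fin n => j ∈ H i'')) v
            (fun j => ω i j) (fun i'' j => η i'' j)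
            (fun i'' j k k' => z i'' i j k k')]
      exact hB i
    · simp only [Finset.mul_sum]
      exact hobj
end
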